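/- arXiv:2603.22147 — 8 statements merged into one kernel-verified Lean document; each statement's English description precedes it below -/
import Mathlib

section
/- The images of the input intervals under π, namely the sets π([p_j, p_{j+1})) = [π(p_j), π(p_j) + (p_{j+1} − p_j)) for 0 ≤ j < r, are pairwise disjoint intervals whose union is {0, …, n−1}. Consequently, for each j, if q = π(p_j) and q' is the least element of Q ∪ {n} strictly greater than q, then q' − q = p_{j+1} − p_j and π([p_j, p_{j+1})) = [q, q'); that is, each output interval is exactly the image of the corresponding input interval. -/
/-- The images of the input intervals under `π` are pairwise
disjoint intervals covering `{0,…,n−1}`, and each output interval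
`[q, q')` (consecutive elements of `Q ∪ {n}`) is exactly the image of the
corresponding input interval, with matching lengths. -/
theorem output_intervals_are_images
    (n : ℕ) (hn : 1 ≤ n) (π : ℕ → ℕ)
    (hπ : Set.BijOn π (Set.Iio n) (Set.Iio n))
    (P Q : Finset ℕ)
    (hP : P = (Finset.range n).filter (fun i => i = 0 ∨ π i ≠ π (i - 1) + 1))
    (hQ : Q = P.image π)
    (nxtP nxtQ : ℕ → ℕ)
    (hnxtP : ∀ p ∈ P, IsLeast {x | (x ∈ P ∨ x = n) ∧ p < x} (nxtP p))
    (hnxtQ : ∀ q ∈ Q, IsLeast {x | (x ∈ Q ∨ x = n) ∧ q < x} (nxtQ q)) :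
    (∀ p ∈ P, π '' Set.Ico p (nxtP p) = Set.Ico (π p) (π p + (nxtP p - p))) ∧
    (∀ p₁ ∈ P, ∀ p₂ ∈ P, p₁ ≠ p₂ →
      Disjoint (π '' Set.Ico p₁ (nxtP p₁)) (π '' Set.Ico p₂ (nxtP p₂))) ∧
    (⋃ p ∈ (P : Set ℕ), π '' Set.Ico p (nxtP p)) = Set.Iio n ∧
    (∀ p ∈ P, nxtQ (π p) - π p = nxtP p - p ∧
      π '' Set.Ico p (nxtP p) = Set.Ico (π p) (nxtQ (π p))) := by
  have hmemP : ∀ i, i ∈ P ↔ i < n ∧ (i = 0 ∨ π i ≠ π (i - 1) + 1) := by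
    intro i
    rw [hP, Finset.mem_filter, Finset.mem_range]
  have hPn : ∀ p ∈ P, p < n := fun p hp => ((hmemP p).mp hp).1
  have h0P : (0 : ℕ) ∈ P := (hmemP 0).mpr ⟨hn, Or.inl rfl⟩
  have hle : ∀ p ∈ P, nxtP p ≤ n := fun p hp =>
    (hnxtP p hp).2 ⟨Or.inr rfl, hPn p hp⟩
  have hgt : ∀ p ∈ P, p < nxtP p := fun p hp => (hnxtP p hp).1.2
  -- arithmetic progression on each input interval
  have prog : ∀ p ∈ P, ∀ i, p ≤ i → i < nxtP p → π i = π p + (i - p) := by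
    intro p hp i
    induction i with
    | zero =>
      intro h1 _
      have : p = 0 := Nat.le_zero.mp h1
      simp [this]
    | succ k ih =>
      intro h1 h2
      rcases Nat.lt_or_ge p (k + 1) with h | h
      · have hk : p ≤ k := by omega
        have hkn : k + 1 < n := lt_of_lt_of_le h2 (hle p hp)
        have hnotP : k + 1 ∉ P := by
          intro hmem
          have := (hnxtP p hp).2 ⟨Or.inl hmem, h⟩
          omega
        rw [hmemP] at hnotP
        push_neg at hnotP
        have hstep := (hnotP hkn).2
        simp only [Nat.add_sub_cancel] at hstep
        have hk2 : k < nxtP p := by omega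
        have := ih hk hk2
        omega
      · have : p = k + 1 := by omega
        simp [this]
  have hIcoSub : ∀ p ∈ P, Set.Ico p (nxtP p) ⊆ Set.Iio n := by
    intro p hp x hx
    exact lt_of_lt_of_le hx.2 (hle p hp)
  -- image of each input interval
  have himg : ∀ p ∈ P, π '' Set.Ico p (nxtP p) = Set.Ico (π p) (π p + (nxtP p - p)) := by
    intro p hp
    ext y
    constructor
    · rintro ⟨x, hx, rfl⟩
      rw [Set.mem_Ico] at hx
      have := prog p hp x hx.1 hx.2
      rw [Set.mem_Ico]
      omega
    · rintro ⟨hy1, hy2⟩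
      refine ⟨p + (y - π p), ?_, ?_⟩
      · rw [Set.mem_Ico]; omega
      · have h1 : p ≤ p + (y - π p) := by omega
        have h2 : p + (y - π p) < nxtP p := by omega
        rw [prog p hp _ h1 h2]; omega
  -- disjointness
  have hdisj : ∀ p₁ ∈ P, ∀ p₂ ∈ P, p₁ ≠ p₂ →
      Disjoint (π '' Set.Ico p₁ (nxtP p₁)) (π '' Set.Ico p₂ (nxtP p₂)) := by
    intro p₁ h1 p₂ h2 hne
    rw [Set.disjoint_iff_inter_eq_empty,
      ← hπ.injOn.image_inter (hIcoSub p₁ h1) (hIcoSub p₂ h2)]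
    have : Set.Ico p₁ (nxtP p₁) ∩ Set.Ico p₂ (nxtP p₂) = ∅ := by
      rcases hne.lt_or_gt with h | h
      · have := (hnxtP p₁ h1).2 ⟨Or.inl h2, h⟩
        ext x; simp only [Set.mem_inter_iff, Set.mem_Ico, Set.mem_empty_iff_false,
          iff_false, not_and]; omega
      · have := (hnxtP p₂ h2).2 ⟨Or.inl h1, h⟩
        ext x; simp only [Set.mem_inter_iff, Set.mem_Ico, Set.mem_empty_iff_false,
          iff_false, not_and]; omega
    rw [this, Set.image_empty]
  -- covering
  have hcover : ∀ i, i < n → ∃ p ∈ P, p ≤ i ∧ i < nxtP p := by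
    intro i hi
    have hne : (P.filter (· ≤ i)).Nonempty :=
      ⟨0, Finset.mem_filter.mpr ⟨h0P, by simp⟩⟩
    set p := (P.filter (· ≤ i)).max' hne with hpdef
    have hpmem := (P.filter (· ≤ i)).max'_mem hne
    rw [Finset.mem_filter] at hpmem
    refine ⟨p, hpmem.1, hpmem.2, ?_⟩
    by_contra hcon
    push_neg at hcon
    have hmem := (hnxtP p hpmem.1).1
    rcases hmem.1 with hQ' | hQ'
    · have : nxtP p ≤ p :=
        Finset.le_max' _ _ (Finset.mem_filter.mpr ⟨hQ', by simpa using hcon⟩)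
      have := hmem.2
      omega
    · omega
  have hunion : (⋃ p ∈ (P : Set ℕ), π '' Set.Ico p (nxtP p)) = Set.Iio n := by
    apply Set.Subset.antisymm
    · simp only [Set.iUnion_subset_iff]
      intro p hp y hy
      obtain ⟨x, hx, rfl⟩ := hy
      exact hπ.mapsTo (hIcoSub p hp hx)
    · intro y hy
      obtain ⟨x, hx, rfl⟩ := hπ.surjOn hy
      obtain ⟨p, hp, hle1, hlt1⟩ := hcover x hx
      exact Set.mem_biUnion hp ⟨x, Set.mem_Ico.mpr ⟨hle1, hlt1⟩, rfl⟩
  -- the key fact about nxtQ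
  have hQkey : ∀ p ∈ P, nxtQ (π p) = π p + (nxtP p - p) := by
    intro p hp
    set L := nxtP p - p with hL
    have hL1 : 1 ≤ L := by have := hgt p hp; omega
    have hen : π p + L ≤ n := by
      have hx : nxtP p - 1 ∈ Set.Ico p (nxtP p) := by
        rw [Set.mem_Ico]; have := hgt p hp; omega
      have h2 := hπ.mapsTo (hIcoSub p hp hx)
      have h3 := prog p hp (nxtP p - 1) (by have := hgt p hp; omega)
        (by have := hgt p hp; omega)
      simp only [Set.mem_Iio] at h2
      omega
    have hmem : (π p + L ∈ Q ∨ π p + L = n) := by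
      rcases eq_or_lt_of_le hen with he | he
      · right; omega
      · left
        have hIio : π p + L ∈ Set.Iio n := he
        rw [← hunion] at hIio
        obtain ⟨p', hp', hmem'⟩ := Set.mem_iUnion₂.mp hIio
        have hp'' : p' ∈ P := hp'
        rw [himg p' hp''] at hmem'
        rw [Set.mem_Ico] at hmem'
        have hL'1 : 1 ≤ nxtP p' - p' := by have := hgt p' hp''; omega
        have hne : p ≠ p' := by
          intro hcontra
          subst hcontra
          omega
        have hd := hdisj p hp p' hp'' hne
        rw [himg p hp, himg p' hp''] at hd
        have hnp' : π p' ∉ Set.Ico (π p) (π p + L) := by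
          intro hc
          exact Set.disjoint_left.mp hd hc
            (Set.mem_Ico.mpr ⟨le_refl _, by omega⟩)
        have hnp : π p ∉ Set.Ico (π p') (π p' + (nxtP p' - p')) := by
          intro hc
          exact Set.disjoint_left.mp hd
            (Set.mem_Ico.mpr ⟨le_refl _, by omega⟩) hc
        rw [Set.mem_Ico] at hnp' hnp
        push_neg at hnp' hnp
        have heq : π p' = π p + L := by
          by_contra hx
          rcases Nat.lt_or_ge (π p') (π p + L) with hlt | hge
          · have hba : π p' < π p := by
              rcases Nat.lt_or_ge (π p') (π p) with h' | h'
              · exact h'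
              · exact absurd (hnp' h') (by omega)
            have := hnp (le_of_lt hba)
            omega
          · omega
        rw [hQ]
        rw [← heq]
        exact Finset.mem_image_of_mem π hp''
    have hlb : ∀ x ∈ {x | (x ∈ Q ∨ x = n) ∧ π p < x}, π p + L ≤ x := by
      rintro x ⟨hx1, hx2⟩
      by_contra hcon
      push_neg at hcon
      have hxn : x < n := by omega
      rcases hx1 with hxQ | hxn'
      · rw [hQ] at hxQ
        obtain ⟨p'', hp'', rfl⟩ := Finset.mem_image.mp hxQ
        by_cases hpp : p'' = p
        · subst hpp; omega
        · have hd := hdisj p hp p'' hp'' (Ne.symm hpp)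
          rw [himg p hp, himg p'' hp''] at hd
          have hL'' : 1 ≤ nxtP p'' - p'' := by have := hgt p'' hp''; omega
          exact Set.disjoint_left.mp hd
            (Set.mem_Ico.mpr ⟨le_of_lt hx2, hcon⟩)
            (Set.mem_Ico.mpr ⟨le_refl _, by omega⟩)
      · omega
    have hisl : IsLeast {x | (x ∈ Q ∨ x = n) ∧ π p < x} (π p + L) :=
      ⟨⟨hmem, by omega⟩, hlb⟩
    have hπpQ : π p ∈ Q := by rw [hQ]; exact Finset.mem_image_of_mem π hp
    exact (hnxtQ (π p) hπpQ).unique hisl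
  refine ⟨himg, hdisj, hunion, fun p hp => ⟨?_, ?_⟩⟩
  · rw [hQkey p hp]; omega
  · rw [himg p hp, hQkey p hp]
end

section
/- The breakpoint set of the inverse permutation π⁻¹, namely {0} ∪ {i ∈ [1, n) : π⁻¹(i) ≠ π⁻¹(i−1) + 1}, is exactly the set Q = {π(p) : p ∈ P} of output starts of π. In particular, π⁻¹ acts by translation on each output interval of π, and π and π⁻¹ have the same number r of input intervals. -/
/-- The breakpoint set of the inverse permutation `σ = π⁻¹` is
exactly the set `Q = {π p : p ∈ P}` of output starts of `π`. In particular
`σ` acts by translation on each output interval of `π`, and `π` and `π⁻¹`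
have the same number `r` of input intervals. -/
theorem inverse_breakpoints_eq_output_starts
    (n : ℕ) (hn : 1 ≤ n) (π σ : ℕ → ℕ)
    (hπ : Set.BijOn π (Set.Iio n) (Set.Iio n))
    (hσ : ∀ i, i < n → σ (π i) = i ∧ π (σ i) = i)
    (P Q : Finset ℕ)
    (hP : P = (Finset.range n).filter (fun i => i = 0 ∨ π i ≠ π (i - 1) + 1))
    (hQ : Q = P.image π) :
    ((Finset.range n).filter (fun i => i = 0 ∨ σ i ≠ σ (i - 1) + 1)) = Q ∧
    (∀ q ∈ Q, ∀ q', IsLeast {x | (x ∈ Q ∨ x = n) ∧ q < x} q' →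
      ∀ i, q ≤ i → i < q' → σ i = σ q + (i - q)) ∧
    Q.card = P.card := by
  have hπmap : ∀ i, i < n → π i < n := fun i hi => hπ.mapsTo hi
  have hPlt : ∀ p ∈ P, p < n := by
    intro p hp
    rw [hP, Finset.mem_filter, Finset.mem_range] at hp
    exact hp.1
  have hQlt : ∀ q ∈ Q, q < n := by
    intro q hq
    rw [hQ, Finset.mem_image] at hq
    obtain ⟨p, hp, rfl⟩ := hq
    exact hπmap p (hPlt p hp)
  have hσlt : ∀ i, i < n → σ i < n := by
    intro i hi
    obtain ⟨j, hj, hji⟩ := hπ.surjOn hi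
    have h := (hσ j hj).1
    rw [hji] at h
    rw [h]; exact hj
  have hPmem : ∀ j, j ∈ P ↔ j < n ∧ (j = 0 ∨ π j ≠ π (j - 1) + 1) := by
    intro j
    rw [hP, Finset.mem_filter, Finset.mem_range]
  -- key equivalence
  have key : ∀ i, 0 < i → i < n → (σ i = σ (i - 1) + 1 ↔ i ∉ Q) := by
    intro i hi0 hin
    constructor
    · intro h hiQ
      rw [hQ, Finset.mem_image] at hiQ
      obtain ⟨p, hp, hpi⟩ := hiQ
      have hpn : p < n := hPlt p hp
      have hσi : σ i = p := by rw [← hpi]; exact (hσ p hpn).1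
      have hkn : i - 1 < n := by omega
      have hπk : π (σ (i - 1)) = i - 1 := (hσ (i - 1) hkn).2
      have hpk : p = σ (i - 1) + 1 := by rw [← hσi]; exact h
      rw [hPmem] at hp
      rcases hp.2 with h0 | hne
      · omega
      · apply hne
        rw [hpi, hpk]
        simp only [Nat.add_sub_cancel]
        rw [hπk]
        omega
    · intro hiQ
      have hjn : σ i < n := hσlt i hin
      have hπj : π (σ i) = i := (hσ i hin).2
      have hjP : σ i ∉ P := by
        intro hmem
        apply hiQ
        rw [hQ, Finset.mem_image]
        exact ⟨σ i, hmem, hπj⟩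
      rw [hPmem] at hjP
      push_neg at hjP
      obtain ⟨hj0, hje⟩ := hjP hjn
      have hπj1 : π (σ i - 1) = i - 1 := by omega
      have : σ (i - 1) = σ i - 1 := by
        rw [← hπj1]; exact (hσ (σ i - 1) (by omega)).1
      omega
  have hQ0 : 0 ∈ Q := by
    obtain ⟨j, hj, hji⟩ := hπ.surjOn (show (0:ℕ) ∈ Set.Iio n from hn)
    rw [hQ, Finset.mem_image]
    refine ⟨j, ?_, hji⟩
    rw [hPmem]
    refine ⟨hj, ?_⟩
    by_cases h0 : j = 0
    · exact Or.inl h0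
    · exact Or.inr (by rw [hji]; omega)
  have hmain : ((Finset.range n).filter (fun i => i = 0 ∨ σ i ≠ σ (i - 1) + 1)) = Q := by
    ext i
    rw [Finset.mem_filter, Finset.mem_range]
    constructor
    · rintro ⟨hin, h0 | hne⟩
      · rw [h0]; exact hQ0
      · by_cases hi0 : i = 0
        · rw [hi0]; exact hQ0
        · by_contra hiQ
          exact hne ((key i (by omega) hin).2 hiQ)
    · intro hiQ
      refine ⟨hQlt i hiQ, ?_⟩
      by_cases hi0 : i = 0
      · exact Or.inl hi0
      · refine Or.inr (fun h => ?_)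
        exact (key i (by omega) (hQlt i hiQ)).1 h hiQ
  refine ⟨hmain, ?_, ?_⟩
  · intro q hq q' hq' i hqi
    induction i, hqi using Nat.le_induction with
    | base => intro _; simp
    | succ m hm ih =>
      intro hlt
      have hmq' : m < q' := by omega
      have ihm := ih hmq'
      have hq'n : q' ≤ n := by
        rcases hq'.1.1 with h | h
        · exact le_of_lt (hQlt q' h)
        · omega
      have hmQ : m + 1 ∉ Q := by
        intro hmem
        have := hq'.2 ⟨Or.inl hmem, by omega⟩
        omega
      have hk := (key (m + 1) (by omega) (by omega)).2 hmQ
      simp only [Nat.add_sub_cancel] at hk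
      omega
  · rw [hQ]
    apply Finset.card_image_of_injOn
    intro a ha b hb hab
    exact hπ.injOn (Set.mem_Iio.mpr (hPlt a ha)) (Set.mem_Iio.mpr (hPlt b hb)) hab
end

section
/- (Balancing theorem of Nishimoto–Tabei, parameterized by Brown–Gagie–Rossi.) There exists a set P' with P ⊆ P' ⊆ {0, …, n−1} and |P'| ≤ α·r/(α−1) — equivalently at most r/(α−1) elements are added to P — such that, setting Q' = {π(p) : p ∈ P'}, for every pair of consecutive elements q_s < q_e of Q' ∪ {n} the weight of (q_s, q_e) with respect to P' is strictly less than 2α, i.e., |{p ∈ P' : q_s < p < q_e}| < 2α. -/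
/-!
Call an output interval heavy when its weight is at least `2α`, and give every output interval
the potential `max(0, weight - (α - 1))`; the total potential is at most `r`, since the input
breakpoints are shared out among the output intervals. Splitting a heavy interval at its
`α`-th breakpoint `x` (and adding `π⁻¹(x)` to the breakpoints) leaves a left part of weight `α - 1`,
which costs nothing, and a right part that is lighter by `α`, while the new breakpoint adds `1`
to the weight of a single interval. So every added breakpoint lowers the potential by `α - 1`,
and at most `r / (α - 1)` breakpoints are added before no interval is heavy.
-/

open Finset

theorem Finset.filter_eq_map_orderEmbOfFin {α : Type*} [LinearOrder α] (s : Finset α)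
    (P : α → Prop) [DecidablePred P] :
    {y ∈ s | P y} =
      ({i | P (s.orderEmbOfFin rfl i)} : Finset (Fin #s)).map (s.orderEmbOfFin rfl).toEmbedding := by
  nth_rw 1 [← s.map_orderEmbOfFin_univ rfl, filter_map]
  rfl

theorem Finset.exists_mem_card_filter_lt_eq {α : Type*} [LinearOrder α] (s : Finset α) {k : ℕ}
    (hk : k < #s) : ∃ x ∈ s, #{y ∈ s | y < x} = k ∧ #{y ∈ s | x < y} = #s - k - 1 := by
  refine ⟨s.orderEmbOfFin rfl ⟨k, hk⟩, s.orderEmbOfFin_mem rfl _, ?_, ?_⟩ <;>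
    rw [filter_eq_map_orderEmbOfFin, card_map] <;>
    simp only [OrderEmbedding.lt_iff_lt]
  · simp [filter_gt_eq_Iio]
  · simp [filter_lt_eq_Ioi]; omega

namespace Balancing

/-- `p` lies strictly between `q` and the successor of `q` in `T`; this avoids naming the
successor. -/
def InGap (T : Finset ℕ) (q p : ℕ) : Prop := q < p ∧ ∀ t ∈ T, q < t → p < t

instance (T : Finset ℕ) (q : ℕ) : DecidablePred (InGap T q) :=
  fun _ => inferInstanceAs (Decidable (_ ∧ _))

section InGap

variable {T : Finset ℕ} {q p x q₀ : ℕ}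

theorem InGap.eq_of_mem {a b : ℕ} (ha : InGap T a p) (hb : InGap T b p) (haT : a ∈ T)
    (hbT : b ∈ T) : a = b := by
  by_contra hne
  rcases Nat.lt_or_gt_of_ne hne with h | h
  · exact (ha.2 b hbT h).asymm hb.1
  · exact (hb.2 a haT h).asymm ha.1

theorem card_filter_inGap_le_one {Q : Finset ℕ} (hQ : Q ⊆ T) (p : ℕ) :
    #{q ∈ Q | InGap T q p} ≤ 1 := by
  refine card_le_one.2 fun a ha b hb => ?_
  rw [mem_filter] at ha hb
  exact ha.2.eq_of_mem hb.2 (hQ ha.1) (hQ hb.1)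

theorem sum_card_filter_inGap_le {Q : Finset ℕ} (hQ : Q ⊆ T) (S : Finset ℕ) :
    ∑ q ∈ Q, #{p ∈ S | InGap T q p} ≤ #S :=
  calc ∑ q ∈ Q, #{p ∈ S | InGap T q p} = ∑ p ∈ S, #{q ∈ Q | InGap T q p} :=
        sum_card_bipartiteAbove_eq_sum_card_bipartiteBelow _
    _ ≤ ∑ _p ∈ S, 1 := sum_le_sum fun p _ => card_filter_inGap_le_one hQ p
    _ = #S := card_eq_sum_ones S |>.symm

theorem sum_card_filter_inGap_insert_le {Q : Finset ℕ} (hQ : Q ⊆ T) (S : Finset ℕ) (p c : ℕ) :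
    ∑ q ∈ Q, (#{s ∈ insert p S | InGap T q s} - c) ≤
      ∑ q ∈ Q, (#{s ∈ S | InGap T q s} - c) + 1 :=
  calc ∑ q ∈ Q, (#{s ∈ insert p S | InGap T q s} - c)
      ≤ ∑ q ∈ Q, ((#{s ∈ S | InGap T q s} - c) + if InGap T q p then 1 else 0) := by
        gcongr with q
        rw [filter_insert]
        split_ifs
        · have := card_insert_le p {s ∈ S | InGap T q s}
          omega
        · omega
    _ = ∑ q ∈ Q, (#{s ∈ S | InGap T q s} - c) + #{q ∈ Q | InGap T q p} := by
        rw [sum_add_distrib, sum_boole, Nat.cast_id]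
    _ ≤ _ := by grw [card_filter_inGap_le_one hQ p]

theorem inGap_insert_iff : InGap (insert x T) q p ↔ InGap T q p ∧ (q < x → p < x) := by
  simp only [InGap, mem_insert, forall_eq_or_imp]
  tauto

theorem inGap_insert_left_iff (hx : InGap T q₀ x) :
    InGap (insert x T) q₀ p ↔ InGap T q₀ p ∧ p < x := by
  rw [inGap_insert_iff]
  exact and_congr_right fun _ => imp_iff_right hx.1

theorem inGap_insert_right_iff (hx : InGap T q₀ x) :
    InGap (insert x T) x p ↔ InGap T q₀ p ∧ x < p := by
  rw [inGap_insert_iff]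
  constructor
  · rintro ⟨⟨hxp, hT⟩, -⟩
    exact ⟨⟨hx.1.trans hxp, fun t ht hq₀t => hT t ht (hx.2 t ht hq₀t)⟩, hxp⟩
  · rintro ⟨hp, hxp⟩
    exact ⟨⟨hxp, fun t ht hxt => hp.2 t ht (hx.1.trans hxt)⟩, fun h => absurd h (lt_irrefl x)⟩

theorem inGap_insert_iff_of_ne (hx : InGap T q₀ x) (hq₀ : q₀ ∈ T) (hq : q ∈ T) (hne : q ≠ q₀) :
    InGap (insert x T) q p ↔ InGap T q p := by
  rw [inGap_insert_iff, and_iff_left_iff_imp]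
  intro hp hqx
  rcases Nat.lt_or_gt_of_ne hne with h | h
  · exact (hp.2 q₀ hq₀ h).trans hx.1
  · exact absurd hqx (hx.2 q hq h).asymm

theorem sum_card_filter_inGap_insert_split {Q S : Finset ℕ} (hQ : Q ⊆ T) (hq₀ : q₀ ∈ Q)
    (hx : InGap T q₀ x) (c : ℕ) :
    ∑ q ∈ insert x Q, (#{p ∈ S | InGap (insert x T) q p} - c) =
      (#{p ∈ S | InGap T q₀ p ∧ x < p} - c) + (#{p ∈ S | InGap T q₀ p ∧ p < x} - c) +
        ∑ q ∈ Q.erase q₀, (#{p ∈ S | InGap T q p} - c) := by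
  have hxQ : x ∉ Q := fun h => lt_irrefl x (hx.2 x (hQ h) hx.1)
  rw [sum_insert hxQ, ← add_sum_erase Q _ hq₀, ← add_assoc]
  simp only [inGap_insert_right_iff hx, inGap_insert_left_iff hx]
  congr 1
  refine sum_congr rfl fun q hq => ?_
  simp only [inGap_insert_iff_of_ne hx (hQ hq₀) (hQ (mem_of_mem_erase hq)) (ne_of_mem_erase hq)]

theorem inGap_iff_of_consecutive {qs qe : ℕ} (hqe : qe ∈ T) (hlt : qs < qe)
    (hcons : ∀ t ∈ T, ¬(qs < t ∧ t < qe)) : InGap T qs p ↔ qs < p ∧ p < qe :=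
  ⟨fun h => ⟨h.1, h.2 qe hqe hlt⟩,
    fun h => ⟨h.1, fun t ht hqt => h.2.trans_le (not_lt.1 fun htq => hcons t ht ⟨hqt, htq⟩)⟩⟩

end InGap

section Potential

variable (n : ℕ) (π : ℕ → ℕ) (α : ℕ)

/-- The weight of `(q, q')` with respect to `S`, where `q'` is the successor of `q` in
`π(S) ∪ {n}`. -/
def weight (S : Finset ℕ) (q : ℕ) : ℕ := #{p ∈ S | InGap (insert n (S.image π)) q p}

def potential (S : Finset ℕ) : ℕ := ∑ q ∈ S.image π, (weight n π S q - (α - 1))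

theorem potential_le_card (S : Finset ℕ) : potential n π α S ≤ #S :=
  (sum_le_sum fun _ _ => Nat.sub_le _ _).trans (sum_card_filter_inGap_le (subset_insert _ _) S)

variable {n π α}

theorem exists_potential_insert_add_le (hα : 0 < α) (hπ : Set.SurjOn π (Set.Iio n) (Set.Iio n))
    {S : Finset ℕ} (hS : ∀ p ∈ S, p < n) {q₀ : ℕ} (hq₀ : q₀ ∈ S.image π)
    (heavy : 2 * α ≤ weight n π S q₀) :
    ∃ p < n, p ∉ S ∧ potential n π α (insert p S) + (α - 1) ≤ potential n π α S := by
  obtain ⟨x, hxF, hbelow, habove⟩ := exists_mem_card_filter_lt_eq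
    {p ∈ S | InGap (insert n (S.image π)) q₀ p} (k := α - 1) (by unfold weight at heavy; omega)
  obtain ⟨hxS, hx⟩ := mem_filter.1 hxF
  obtain ⟨p, hpn, rfl⟩ := hπ (hS _ hxS)
  have hpS : p ∉ S := fun h => lt_irrefl _ (hx.2 _ (mem_insert_of_mem (mem_image_of_mem π h)) hx.1)
  refine ⟨p, hpn, hpS, ?_⟩
  have hold : potential n π α S = (weight n π S q₀ - (α - 1)) +
      ∑ q ∈ (S.image π).erase q₀, (weight n π S q - (α - 1)) :=
    (add_sum_erase _ _ hq₀).symm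
  have hnew : potential n π α (insert p S) = ∑ q ∈ insert (π p) (S.image π),
      (#{s ∈ insert p S | InGap (insert (π p) (insert n (S.image π))) q s} - (α - 1)) := by
    rw [potential, image_insert]
    simp only [weight, image_insert, insert_comm n (π p)]
  have hinsert := sum_card_filter_inGap_insert_le
    (insert_subset_insert (π p) (subset_insert n (S.image π))) S p (α - 1)
  have hsplit := sum_card_filter_inGap_insert_split (S := S) (subset_insert n _) hq₀ hx (α - 1)
  simp only [filter_filter] at hbelow habove
  unfold weight at hold heavy
  -- the gap of `q₀` (weight `w`, term `w - (α - 1)`) becomes gaps of weights `α - 1` and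
  -- `w - α`, the other gaps keep their weight, and `p` adds `1` to at most one of them
  omega

theorem exists_balanced_superset (hα : 2 ≤ α) (hπ : Set.SurjOn π (Set.Iio n) (Set.Iio n))
    (S : Finset ℕ) (hS : ∀ p ∈ S, p < n) :
    ∃ S', S ⊆ S' ∧ (∀ p ∈ S', p < n) ∧ #S' * (α - 1) ≤ #S * (α - 1) + potential n π α S ∧
      ∀ q ∈ S'.image π, weight n π S' q < 2 * α := by
  induction hΦ : potential n π α S using Nat.strong_induction_on generalizing S with
  | _ Φ ih =>
  by_cases hbal : ∀ q ∈ S.image π, weight n π S q < 2 * α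
  · exact ⟨S, subset_rfl, hS, le_self_add, hbal⟩
  push Not at hbal
  obtain ⟨q₀, hq₀, heavy⟩ := hbal
  obtain ⟨p, hpn, hpS, hdec⟩ := exists_potential_insert_add_le (by omega) hπ hS hq₀ heavy
  obtain ⟨S', hsub, hS'n, hcard, hbal'⟩ :=
    ih _ (by omega) (insert p S) (forall_mem_insert _ _ _ |>.2 ⟨hpn, hS⟩) rfl
  refine ⟨S', (subset_insert _ _).trans hsub, hS'n, ?_, hbal'⟩
  rw [card_insert_of_notMem hpS, add_one_mul] at hcard
  omega

end Potential

end Balancing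

theorem balancing_exists_general
    (n : ℕ) (π : ℕ → ℕ)
    (hπ : Set.BijOn π (Set.Iio n) (Set.Iio n))
    (P : Finset ℕ)
    (hP : P = (Finset.range n).filter (fun i => i = 0 ∨ π i ≠ π (i - 1) + 1))
    (α : ℕ) (hα : 2 ≤ α) :
    ∃ P' : Finset ℕ, P ⊆ P' ∧ (∀ p ∈ P', p < n) ∧
      P'.card * (α - 1) ≤ α * P.card ∧
      (P'.card - P.card) * (α - 1) ≤ P.card ∧
      ∀ qs ∈ insert n (P'.image π), ∀ qe ∈ insert n (P'.image π), qs < qe →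
        (∀ x ∈ insert n (P'.image π), ¬(qs < x ∧ x < qe)) →
        (P'.filter (fun p => qs < p ∧ p < qe)).card < 2 * α := by
  have hPn : ∀ p ∈ P, p < n := fun p hp => by
    rw [hP] at hp
    exact mem_range.1 (mem_filter.1 hp).1
  obtain ⟨P', hPP', hP'n, hcard, hbal⟩ := Balancing.exists_balanced_superset hα hπ.surjOn P hPn
  have hΦ := Balancing.potential_le_card n π α P
  refine ⟨P', hPP', hP'n, ?_, ?_, ?_⟩
  · have : α * #P = #P * (α - 1) + #P := by
      rw [mul_comm, ← Nat.mul_add_one, Nat.sub_add_cancel (by omega)]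
    omega
  · rw [Nat.sub_mul]
    omega
  · intro qs hqs qe hqe hlt hcons
    rcases mem_insert.1 hqs with rfl | hqs
    · rw [filter_false_of_mem fun p hp h => (hP'n p hp).asymm h.1, card_empty]
      omega
    · rw [filter_congr fun p _ => (Balancing.inGap_iff_of_consecutive hqe hlt hcons).symm]
      exact hbal qs hqs

/-- Nishimoto–Tabei balancing, parameterized by
Brown–Gagie–Rossi: there exists `P' ⊇ P` inside `{0,…,n−1}` with
`|P'| ≤ α·r/(α−1)` (equivalently at most `r/(α−1)` added elements) such that,
with `Q' = π(P')`, every gap between consecutive elements of `Q' ∪ {n}` has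
weight strictly less than `2α` with respect to `P'`. -/
theorem balancing_exists
    (n : ℕ) (hn : 1 ≤ n) (π : ℕ → ℕ)
    (hπ : Set.BijOn π (Set.Iio n) (Set.Iio n))
    (P : Finset ℕ)
    (hP : P = (Finset.range n).filter (fun i => i = 0 ∨ π i ≠ π (i - 1) + 1))
    (α : ℕ) (hα : 2 ≤ α) :
    ∃ P' : Finset ℕ, P ⊆ P' ∧ (∀ p ∈ P', p < n) ∧
      P'.card * (α - 1) ≤ α * P.card ∧
      (P'.card - P.card) * (α - 1) ≤ P.card ∧
      ∀ qs ∈ insert n (P'.image π), ∀ qe ∈ insert n (P'.image π), qs < qe →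
        (∀ x ∈ insert n (P'.image π), ¬(qs < x ∧ x < qe)) →
        (P'.filter (fun p => qs < p ∧ p < qe)).card < 2 * α :=
  balancing_exists_general n π hπ P hP α hα
end

section
/- (Combinatorial core of simultaneous balancing.) There exists a set P' with P ⊆ P' ⊆ {0, …, n−1} and |P'| ≤ (α+1)·r/(α−1) such that, setting Q' = {π(p) : p ∈ P'}, both balancing conditions hold simultaneously: (i) for every pair of consecutive elements q_s < q_e of Q' ∪ {n}, the weight of (q_s, q_e) with respect to P' is strictly less than 2α; and (ii) for every pair of consecutive elements p_s < p_e of P' ∪ {n}, the weight of (p_s, p_e) with respect to Q' is strictly less than 2α. Hence both π and π⁻¹ admit balanced move structures over a common refinement with at most 2r/(α−1) added intervals in total. -/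
/-!
Measure the imbalance of a set `S` of positions by the potential `Φ(S)`: the total amount by which
the weights of the gaps of `π(S) ∪ {n}` (counted in `S`) and of the gaps of `S ∪ {n}` (counted in
`π(S)`) exceed `α`. Initially `Φ(P) ≤ 2r`. While some gap has weight `≥ 2α`, split it at the point
with exactly `α` counted points before it and add that point's partner under `π` or `π⁻¹` on the
other side: this lowers `Φ` by at least `α - 1`. Hence at most `2r / (α - 1)` points are added
before both sides are balanced.
-/
namespace SimultaneousBalancing

open Finset

def weight (B : Finset ℕ) (a b : ℕ) : ℕ := #{x ∈ B | a < x ∧ x < b}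

section Weight

variable {B : Finset ℕ} {a b y : ℕ}

lemma weight_insert_of_not_between (h : ¬(a < y ∧ y < b)) :
    weight (insert y B) a b = weight B a b := by
  rw [weight, filter_insert, if_neg h, weight]

lemma weight_insert_le (y : ℕ) : weight (insert y B) a b ≤ weight B a b + 1 := by
  rw [weight, filter_insert]
  split_ifs
  · exact card_insert_le _ _
  · exact Nat.le_succ _

lemma weight_insert_of_notMem (hy : y ∉ B) (ha : a < y) (hb : y < b) :
    weight (insert y B) a b = weight B a b + 1 := by
  rw [weight, filter_insert, if_pos ⟨ha, hb⟩, card_insert_of_notMem (by simp [hy]), weight]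

lemma weight_add_one_add_of_mem (hy : y ∈ B) (ha : a < y) (hb : y < b) :
    weight B a y + 1 + weight B y b = weight B a b := by
  have hsplit : {x ∈ B | a < x ∧ x < b} =
      {x ∈ B | a < x ∧ x < y} ∪ insert y {x ∈ B | y < x ∧ x < b} := by
    ext x
    simp only [mem_union, mem_insert, mem_filter]
    constructor
    · rintro ⟨hx, hax, hxb⟩
      rcases lt_trichotomy x y with h | rfl | h <;> simp_all
    · rintro (⟨hx, hax, hxy⟩ | rfl | ⟨hx, hyx, hxb⟩)
      exacts [⟨hx, hax, hxy.trans hb⟩, ⟨hy, ha, hb⟩, ⟨hx, ha.trans hyx, hxb⟩]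
  have hdisj : Disjoint {x ∈ B | a < x ∧ x < y} (insert y {x ∈ B | y < x ∧ x < b}) := by
    simp only [disjoint_left, mem_insert, mem_filter]
    omega
  simp only [weight]
  rw [hsplit, card_union_of_disjoint hdisj, card_insert_of_notMem (by simp)]
  omega

lemma weight_add_le (ha : a < y) (hb : y < b) : weight B a y + weight B y b ≤ weight B a b := by
  by_cases hy : y ∈ B
  · have := weight_add_one_add_of_mem hy ha hb
    omega
  · have := weight_add_one_add_of_mem (mem_insert_self y B) ha hb
    rw [weight_insert_of_not_between (by omega), weight_insert_of_not_between (by omega),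
      weight_insert_of_notMem hy ha hb] at this
    omega

lemma exists_mem_weight_eq_zero (h : 0 < weight B a b) :
    ∃ y ∈ B, a < y ∧ y < b ∧ weight B a y = 0 := by
  set F := {x ∈ B | a < x ∧ x < b}
  have hF : F.Nonempty := card_pos.1 h
  obtain ⟨hyB, hay, hyb⟩ := mem_filter.1 (F.min'_mem hF)
  refine ⟨F.min' hF, hyB, hay, hyb, card_eq_zero.2 (filter_eq_empty_iff.2 ?_)⟩
  rintro x hx ⟨hax, hxy⟩
  exact (F.min'_le x (mem_filter.2 ⟨hx, hax, hxy.trans hyb⟩)).not_gt hxy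

lemma exists_mem_weight_eq {k : ℕ} (hk : k < weight B a b) :
    ∃ y ∈ B, a < y ∧ y < b ∧ weight B a y = k := by
  induction k with
  | zero => exact exists_mem_weight_eq_zero hk
  | succ k ih =>
    obtain ⟨y, hyB, hay, hyb, rfl⟩ := ih (by omega)
    have hsplit := weight_add_one_add_of_mem hyB hay hyb
    obtain ⟨y', hy'B, hyy', hy'b, hzero⟩ := exists_mem_weight_eq_zero (B := B) (a := y) (b := b)
      (by omega)
    refine ⟨y', hy'B, hay.trans hyy', hy'b, ?_⟩
    have := weight_add_one_add_of_mem hyB hay hyy'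
    omega

end Weight

/-- For `q < n` this is the successor of `q` in `A ∪ {n}`: the end of the gap of `A` starting at
`q ∈ A`. -/
noncomputable def gapEnd (n : ℕ) (A : Finset ℕ) (q : ℕ) : ℕ := sInf {x | x ∈ insert n A ∧ q < x}

section GapEnd

variable {n : ℕ} {A : Finset ℕ} {q x y : ℕ}

lemma gapEnd_mem_and_lt (hq : q < n) : gapEnd n A q ∈ insert n A ∧ q < gapEnd n A q :=
  Nat.sInf_mem (s := {x | x ∈ insert n A ∧ q < x}) ⟨n, mem_insert_self n A, hq⟩

lemma lt_gapEnd (hq : q < n) : q < gapEnd n A q := (gapEnd_mem_and_lt hq).2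

lemma gapEnd_mem (hq : q < n) : gapEnd n A q ∈ insert n A := (gapEnd_mem_and_lt hq).1

lemma gapEnd_le (hx : x ∈ insert n A) (hqx : q < x) : gapEnd n A q ≤ x := Nat.sInf_le ⟨hx, hqx⟩

lemma gapEnd_le_bound (hq : q < n) : gapEnd n A q ≤ n := gapEnd_le (mem_insert_self n A) hq

lemma gapEnd_eq_of_consecutive (hq : q < n) (hx : x ∈ insert n A) (hqx : q < x)
    (hgap : ∀ z ∈ insert n A, ¬(q < z ∧ z < x)) : gapEnd n A q = x :=
  (gapEnd_le hx hqx).antisymm <| not_lt.1 fun h => hgap _ (gapEnd_mem hq) ⟨lt_gapEnd hq, h⟩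

lemma gapEnd_eq_of_lt_gapEnd (hq : q < n) (hqx : q < x) (hx : x < gapEnd n A q) :
    gapEnd n A x = gapEnd n A q := by
  have hxn : x < n := hx.trans_le (gapEnd_le_bound hq)
  exact (gapEnd_le (gapEnd_mem hq) hx).antisymm
    (gapEnd_le (gapEnd_mem hxn) (hqx.trans (lt_gapEnd hxn)))

lemma eq_of_between_gapEnd {q₁ q₂ : ℕ} (hq₁ : q₁ ∈ A) (hq₂ : q₂ ∈ A)
    (h₁ : q₁ < x ∧ x < gapEnd n A q₁) (h₂ : q₂ < x ∧ x < gapEnd n A q₂) : q₁ = q₂ := by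
  by_contra hne
  rcases lt_or_gt_of_ne hne with h | h
  · have := gapEnd_le (n := n) (mem_insert_of_mem hq₂) h
    omega
  · have := gapEnd_le (n := n) (mem_insert_of_mem hq₁) h
    omega

lemma mem_insert_insert_iff : x ∈ insert n (insert y A) ↔ x = y ∨ x ∈ insert n A := by
  simp only [mem_insert]
  tauto

lemma gapEnd_insert_of_not_between (hq : q < n) (h : ¬(q < y ∧ y < gapEnd n A q)) :
    gapEnd n (insert y A) q = gapEnd n A q := by
  refine (gapEnd_le (mem_insert_insert_iff.2 (.inr (gapEnd_mem hq))) (lt_gapEnd hq)).antisymm ?_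
  rcases mem_insert_insert_iff.1 (gapEnd_mem (A := insert y A) hq) with hy | hmem
  · have := lt_gapEnd (A := insert y A) hq
    omega
  · exact gapEnd_le hmem (lt_gapEnd hq)

lemma gapEnd_insert_of_between (hq : q < n) (h : q < y ∧ y < gapEnd n A q) :
    gapEnd n (insert y A) q = y := by
  refine (gapEnd_le (mem_insert_insert_iff.2 (.inl rfl)) h.1).antisymm ?_
  rcases mem_insert_insert_iff.1 (gapEnd_mem (A := insert y A) hq) with hy | hmem
  · exact hy.ge
  · exact (h.2.trans_le (gapEnd_le hmem (lt_gapEnd hq))).le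

lemma exists_between_gapEnd (h0 : 0 ∈ A) (hyA : y ∉ A) (hyn : y < n) :
    ∃ q ∈ A, q < y ∧ y < gapEnd n A q := by
  set F := {a ∈ A | a < y}
  have hF : F.Nonempty := ⟨0, mem_filter.2 ⟨h0, Nat.pos_of_ne_zero fun h => hyA (h ▸ h0)⟩⟩
  obtain ⟨hqA, hqy⟩ := mem_filter.1 (F.max'_mem hF)
  refine ⟨F.max' hF, hqA, hqy, not_le.1 fun hle => ?_⟩
  have hlt := lt_gapEnd (A := A) (hqy.trans hyn)
  rcases mem_insert.1 (gapEnd_mem (A := A) (hqy.trans hyn)) with hn | hmem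
  · omega
  · have hne : gapEnd n A (F.max' hF) ≠ y := fun h => hyA (h ▸ hmem)
    have := F.le_max' _ (mem_filter.2 ⟨hmem, lt_of_le_of_ne hle hne⟩)
    omega

end GapEnd

-- Truncated subtraction is intended: a gap contributes the amount by which its weight exceeds `α`.
noncomputable def excess (n α : ℕ) (A B : Finset ℕ) : ℕ := ∑ q ∈ A, (weight B q (gapEnd n A q) - α)

section Excess

variable {n α : ℕ} {A B : Finset ℕ} {q₀ y z : ℕ}

lemma excess_le_card : excess n α A B ≤ #B := by
  calc excess n α A B ≤ ∑ q ∈ A, weight B q (gapEnd n A q) :=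
        sum_le_sum fun _ _ => Nat.sub_le _ _
    _ = #(A.biUnion fun q => {x ∈ B | q < x ∧ x < gapEnd n A q}) := by
        refine (card_biUnion fun q₁ h₁ q₂ h₂ hne => disjoint_left.2 fun x hx₁ hx₂ => hne ?_).symm
        exact eq_of_between_gapEnd h₁ h₂ (mem_filter.1 hx₁).2 (mem_filter.1 hx₂).2
    _ ≤ #B := card_le_card (biUnion_subset.2 fun _ _ => filter_subset _ _)

lemma excess_insert_add (hA : ∀ q ∈ A, q < n) (hq₀ : q₀ ∈ A) (h₁ : q₀ < y)
    (h₂ : y < gapEnd n A q₀) :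
    excess n α (insert y A) B + (weight B q₀ (gapEnd n A q₀) - α) =
      excess n α A B + (weight B q₀ y - α) + (weight B y (gapEnd n A q₀) - α) := by
  have hq₀n := hA q₀ hq₀
  have hyn : y < n := h₂.trans_le (gapEnd_le_bound hq₀n)
  have hyA : y ∉ A := fun h => (gapEnd_le (mem_insert_of_mem h) h₁).not_gt h₂
  have hy_end : gapEnd n (insert y A) y = gapEnd n A q₀ := by
    rw [gapEnd_insert_of_not_between hyn fun h => h.1.false, gapEnd_eq_of_lt_gapEnd hq₀n h₁ h₂]
  have hq₀_end : gapEnd n (insert y A) q₀ = y := gapEnd_insert_of_between hq₀n ⟨h₁, h₂⟩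
  have hother : ∀ q ∈ A.erase q₀, weight B q (gapEnd n (insert y A) q) - α =
      weight B q (gapEnd n A q) - α := fun q hq => by
    rw [gapEnd_insert_of_not_between (hA q (mem_of_mem_erase hq)) fun h =>
      ne_of_mem_erase hq (eq_of_between_gapEnd (mem_of_mem_erase hq) hq₀ h ⟨h₁, h₂⟩)]
  unfold excess
  rw [sum_insert hyA, hy_end,
    ← add_sum_erase A (fun q => weight B q (gapEnd n (insert y A) q) - α) hq₀,
    ← add_sum_erase A (fun q => weight B q (gapEnd n A q) - α) hq₀, hq₀_end, sum_congr rfl hother]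
  ring

lemma excess_insert_le (hA : ∀ q ∈ A, q < n) (h0 : 0 ∈ A) (hyn : y < n) :
    excess n α (insert y A) B ≤ excess n α A B := by
  by_cases hyA : y ∈ A
  · rw [insert_eq_of_mem hyA]
  obtain ⟨q₀, hq₀, h₁, h₂⟩ := exists_between_gapEnd h0 hyA hyn
  have := excess_insert_add (α := α) (B := B) hA hq₀ h₁ h₂
  have := weight_add_le (B := B) h₁ h₂
  omega

lemma exists_excess_insert_add_le (hα : 1 ≤ α) (hA : ∀ q ∈ A, q < n) (hq₀ : q₀ ∈ A)
    (hheavy : 2 * α ≤ weight B q₀ (gapEnd n A q₀)) :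
    ∃ y ∈ B, excess n α (insert y A) B + α ≤ excess n α A B := by
  obtain ⟨y, hyB, h₁, h₂, hw⟩ :=
    exists_mem_weight_eq (B := B) (a := q₀) (b := gapEnd n A q₀) (k := α) (by omega)
  have := excess_insert_add (α := α) (B := B) hA hq₀ h₁ h₂
  have := weight_add_one_add_of_mem hyB h₁ h₂
  exact ⟨y, hyB, by omega⟩

lemma excess_insert_right_of_mem (hz : z ∈ A) : excess n α A (insert z B) = excess n α A B :=
  sum_congr rfl fun _ _ => by
    rw [weight_insert_of_not_between fun h => (gapEnd_le (mem_insert_of_mem hz) h.1).not_gt h.2]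

lemma excess_insert_right_le (z : ℕ) : excess n α A (insert z B) ≤ excess n α A B + 1 := by
  by_cases hz : ∃ q₀ ∈ A, q₀ < z ∧ z < gapEnd n A q₀
  · obtain ⟨q₀, hq₀, hz⟩ := hz
    calc excess n α A (insert z B)
        ≤ ∑ q ∈ A, ((weight B q (gapEnd n A q) - α) + if q = q₀ then 1 else 0) :=
          sum_le_sum fun q hq => ?_
      _ = excess n α A B + 1 := by rw [sum_add_distrib, sum_ite_eq' A q₀, if_pos hq₀]; rfl
    split_ifs with h
    · have := weight_insert_le (B := B) (a := q) (b := gapEnd n A q) z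
      omega
    · rw [weight_insert_of_not_between fun h' => h (eq_of_between_gapEnd hq hq₀ h' hz)]
      omega
  · push Not at hz
    refine le_add_right (sum_le_sum fun q hq => ?_)
    rw [weight_insert_of_not_between fun h => (hz q hq h.1).not_gt h.2]

end Excess

noncomputable def potential (n α : ℕ) (A B : Finset ℕ) : ℕ := excess n α A B + excess n α B A

section Potential

variable {n α : ℕ} {A B : Finset ℕ} {q₀ : ℕ}

lemma potential_comm : potential n α A B = potential n α B A := add_comm _ _

lemma potential_le_card_add_card : potential n α A B ≤ #A + #B :=
  (add_le_add excess_le_card excess_le_card).trans_eq (add_comm _ _)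

/-- Splitting a heavy gap of `A` at a point `y ∈ B` gains `α`. Adding a partner `x` to `B` costs
at most `1`: as a counted point it lies in at most one gap of `A ∪ {y}`, and as a new endpoint it
only splits a gap of `B`. -/
lemma exists_potential_insert_add_le (hα : 1 ≤ α) (hA : ∀ q ∈ A, q < n)
    (hB : ∀ q ∈ B, q < n) (h0B : 0 ∈ B) (hq₀ : q₀ ∈ A)
    (hheavy : 2 * α ≤ weight B q₀ (gapEnd n A q₀)) :
    ∃ y ∈ B, ∀ x < n, potential n α (insert y A) (insert x B) + α ≤ potential n α A B + 1 := by
  obtain ⟨y, hyB, hsplit⟩ := exists_excess_insert_add_le hα hA hq₀ hheavy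
  refine ⟨y, hyB, fun x hx => ?_⟩
  have hcount := excess_insert_right_le (n := n) (α := α) (A := insert y A) (B := B) x
  have hcount' := excess_insert_right_of_mem (n := n) (α := α) (A := insert x B) (B := A)
    (mem_insert_of_mem hyB)
  have hsplit' := excess_insert_le (α := α) (B := A) hB h0B hx
  unfold potential
  omega

end Potential

def IsBalanced (n α : ℕ) (A B : Finset ℕ) : Prop := ∀ q ∈ A, weight B q (gapEnd n A q) < 2 * α

lemma IsBalanced.weight_lt {n α : ℕ} {A B : Finset ℕ} (h : IsBalanced n α A B)
    (hA : ∀ q ∈ A, q < n) {qs qe : ℕ} (hqs : qs ∈ insert n A) (hqe : qe ∈ insert n A)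
    (hlt : qs < qe) (hgap : ∀ x ∈ insert n A, ¬(qs < x ∧ x < qe)) : weight B qs qe < 2 * α := by
  rcases mem_insert.1 hqs with rfl | hqs
  · rcases mem_insert.1 hqe with rfl | hqe
    · exact absurd hlt (lt_irrefl _)
    · exact absurd (hA qe hqe) hlt.not_gt
  · rw [← gapEnd_eq_of_consecutive (hA qs hqs) hqe hlt hgap]
    exact h qs hqs

section Permutation

variable {n α : ℕ} {f : ℕ → ℕ} {S : Finset ℕ}

lemma exists_potential_image_insert_add_le (hα : 1 ≤ α)
    (hf : Set.BijOn f (Set.Iio n) (Set.Iio n)) (hS : ∀ p ∈ S, p < n) (h0S : 0 ∈ S)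
    (h0T : 0 ∈ S.image f) (hnb : ¬(IsBalanced n α (S.image f) S ∧ IsBalanced n α S (S.image f))) :
    ∃ z < n, potential n α (insert z S) ((insert z S).image f) + α ≤
      potential n α S (S.image f) + 1 := by
  have hT : ∀ q ∈ S.image f, q < n := forall_mem_image.2 fun p hp => hf.mapsTo (hS p hp)
  simp only [IsBalanced, not_and_or, not_forall, not_lt, exists_prop] at hnb
  rcases hnb with ⟨q₀, hq₀, hheavy⟩ | ⟨q₀, hq₀, hheavy⟩
  · obtain ⟨y, hyS, hy⟩ := exists_potential_insert_add_le hα hT hS h0S hq₀ hheavy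
    obtain ⟨z, hz, rfl⟩ := hf.surjOn (hS y hyS)
    refine ⟨z, hz, ?_⟩
    rw [image_insert, potential_comm, potential_comm (A := S)]
    exact hy z hz
  · obtain ⟨y, hyT, hy⟩ := exists_potential_insert_add_le hα hS hT h0T hq₀ hheavy
    refine ⟨y, hT y hyT, ?_⟩
    rw [image_insert]
    exact hy (f y) (hf.mapsTo (hT y hyT))

lemma exists_balanced_superset (hα : 2 ≤ α) (hf : Set.BijOn f (Set.Iio n) (Set.Iio n))
    (S : Finset ℕ) (hS : ∀ p ∈ S, p < n) (h0S : 0 ∈ S) (h0T : 0 ∈ S.image f) :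
    ∃ S', S ⊆ S' ∧ (∀ p ∈ S', p < n) ∧
      IsBalanced n α (S'.image f) S' ∧ IsBalanced n α S' (S'.image f) ∧
      (#S' - #S) * (α - 1) + potential n α S' (S'.image f) ≤ potential n α S (S.image f) := by
  induction hm : potential n α S (S.image f) using Nat.strong_induction_on generalizing S with
  | _ m ih =>
  by_cases hbal : IsBalanced n α (S.image f) S ∧ IsBalanced n α S (S.image f)
  · exact ⟨S, subset_rfl, hS, hbal.1, hbal.2, by simp [hm]⟩
  obtain ⟨z, hz, hdrop⟩ := exists_potential_image_insert_add_le (by omega) hf hS h0S h0T hbal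
  obtain ⟨S', hsub, hS', hbal₁, hbal₂, hpot⟩ := ih _ (by omega) (insert z S)
    (forall_mem_insert _ _ _ |>.2 ⟨hz, hS⟩) (mem_insert_of_mem h0S)
    (image_subset_image (subset_insert z S) h0T) rfl
  refine ⟨S', (subset_insert z S).trans hsub, hS', hbal₁, hbal₂, ?_⟩
  have hcard : #S' - #S ≤ #S' - #(insert z S) + 1 := by
    have := card_insert_le z S
    omega
  have := Nat.mul_le_mul_right (α - 1) hcard
  rw [add_mul, one_mul] at this
  omega

end Permutation

end SimultaneousBalancing

open Finset SimultaneousBalancing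

/-- combinatorial core of simultaneous balancing: there exists
`P' ⊇ P` inside `{0,…,n−1}` with `|P'| ≤ (α+1)·r/(α−1)` — at most `2r/(α−1)`
added intervals in total — such that, with `Q' = π(P')`, both balancing
conditions hold: every gap of `Q' ∪ {n}` has weight `< 2α` w.r.t. `P'`, and
every gap of `P' ∪ {n}` has weight `< 2α` w.r.t. `Q'`. Hence both `π` and
`π⁻¹` admit balanced move structures over a common refinement. -/
theorem simultaneous_balancing_exists
    (n : ℕ) (hn : 1 ≤ n) (π : ℕ → ℕ)
    (hπ : Set.BijOn π (Set.Iio n) (Set.Iio n))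
    (P : Finset ℕ)
    (hP : P = (Finset.range n).filter (fun i => i = 0 ∨ π i ≠ π (i - 1) + 1))
    (α : ℕ) (hα : 2 ≤ α) :
    ∃ P' : Finset ℕ, P ⊆ P' ∧ (∀ p ∈ P', p < n) ∧
      P'.card * (α - 1) ≤ (α + 1) * P.card ∧
      (P'.card - P.card) * (α - 1) ≤ 2 * P.card ∧
      (∀ qs ∈ insert n (P'.image π), ∀ qe ∈ insert n (P'.image π), qs < qe →
        (∀ x ∈ insert n (P'.image π), ¬(qs < x ∧ x < qe)) →
        (P'.filter (fun p => qs < p ∧ p < qe)).card < 2 * α) ∧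
      (∀ ps ∈ insert n P', ∀ pe ∈ insert n P', ps < pe →
        (∀ x ∈ insert n P', ¬(ps < x ∧ x < pe)) →
        ((P'.image π).filter (fun q => ps < q ∧ q < pe)).card < 2 * α) := by
  have hPn : ∀ p ∈ P, p < n := fun p hp => mem_range.1 (mem_filter.1 (hP ▸ hp)).1
  have h0P : 0 ∈ P := hP ▸ mem_filter.2 ⟨mem_range.2 hn, Or.inl rfl⟩
  have h0Q : 0 ∈ P.image π := by
    obtain ⟨p, hp, hp0⟩ := hπ.surjOn (show 0 ∈ Set.Iio n from hn)
    refine mem_image.2 ⟨p, hP ▸ mem_filter.2 ⟨mem_range.2 hp, ?_⟩, hp0⟩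
    rw [hp0]
    omega
  obtain ⟨P', hsub, hP'n, hbal₁, hbal₂, hpot⟩ := exists_balanced_superset hα hπ P hPn h0P h0Q
  have hpotP : potential n α P (P.image π) ≤ 2 * #P :=
    potential_le_card_add_card.trans (by have := card_image_le (s := P) (f := π); omega)
  have hadded : (#P' - #P) * (α - 1) ≤ 2 * #P := by omega
  have hQ'n : ∀ q ∈ P'.image π, q < n := forall_mem_image.2 fun p hp => hπ.mapsTo (hP'n p hp)
  refine ⟨P', hsub, hP'n, ?_, hadded, fun qs hqs qe hqe => hbal₁.weight_lt hQ'n hqs hqe,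
    fun ps hps pe hpe => hbal₂.weight_lt hP'n hps hpe⟩
  obtain ⟨d, hd⟩ := Nat.exists_eq_add_of_le (card_le_card hsub)
  rw [hd, Nat.add_sub_cancel_left] at hadded
  rw [hd]
  calc (#P + d) * (α - 1) = #P * (α - 1) + d * (α - 1) := add_mul _ _ _
    _ ≤ #P * (α - 1) + 2 * #P := by omega
    _ = (α + 1) * #P := by rw [show α + 1 = α - 1 + 2 by omega]; ring
end

section
/- (Balanced move structures answer a move query with a bounded scan.) Let P' satisfy P ⊆ P' ⊆ {0, …, n−1} and set Q' = {π(p) : p ∈ P'}. Suppose that for every pair of consecutive elements q_s < q_e of Q' ∪ {n}, the weight of (q_s, q_e) with respect to P' is strictly less than 2α. Then for every i ∈ {0, …, n−1}, letting p = max{x ∈ P' : x ≤ i} and letting q_e be the least element of Q' ∪ {n} strictly greater than π(p): (a) π(i) = π(p) + (i − p); (b) π(p) ≤ π(i) < q_e; and (c) |{x ∈ P' : π(p) < x ≤ π(i)}| < 2α, i.e., the predecessor of π(i) in P' is found by scanning fewer than 2α elements of P' starting from π(p). -/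
/-- In a balanced move structure, a move query is answered with a
bounded scan. If `P ⊆ P' ⊆ {0,…,n−1}` and `Q' = π(P')` satisfies the balance
condition (every gap of `Q' ∪ {n}` has weight `< 2α` w.r.t. `P'`), then for
every `i < n`, letting `p` be the predecessor of `i` in `P'` and `qe` the
least element of `Q' ∪ {n}` strictly greater than `π p`:
(a) `π i = π p + (i − p)`; (b) `π p ≤ π i < qe`; and
(c) fewer than `2α` elements of `P'` lie in `(π p, π i]`. -/
theorem balanced_move_query_bounded_scan
    (n : ℕ) (hn : 1 ≤ n) (π : ℕ → ℕ)
    (hπ : Set.BijOn π (Set.Iio n) (Set.Iio n))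
    (P : Finset ℕ)
    (hP : P = (Finset.range n).filter (fun i => i = 0 ∨ π i ≠ π (i - 1) + 1))
    (α : ℕ) (hα : 2 ≤ α)
    (P' Q' : Finset ℕ) (hPP' : P ⊆ P') (hP'sub : ∀ p ∈ P', p < n)
    (hQ' : Q' = P'.image π)
    (hbal : ∀ qs ∈ insert n Q', ∀ qe ∈ insert n Q', qs < qe →
      (∀ x ∈ insert n Q', ¬(qs < x ∧ x < qe)) →
      (P'.filter (fun p => qs < p ∧ p < qe)).card < 2 * α)
    (i : ℕ) (hi : i < n)
    (p : ℕ) (hp : IsGreatest {x | x ∈ P' ∧ x ≤ i} p)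
    (qe : ℕ) (hqe : IsLeast {x | (x ∈ Q' ∨ x = n) ∧ π p < x} qe) :
    π i = π p + (i - p) ∧
    π p ≤ π i ∧ π i < qe ∧
    (P'.filter (fun x => π p < x ∧ x ≤ π i)).card < 2 * α := by

  obtain ⟨⟨hpP', hpi⟩, hpmax⟩ := hp
  obtain ⟨⟨hqeQ, hqegt⟩, hqemin⟩ := hqe
  have hpn : p < n := hP'sub p hpP'
  have key : ∀ k, p + k ≤ i → π (p + k) = π p + k := by
    intro k
    induction k with
    | zero => simp
    | succ k ih =>
      intro hk
      have hk' : p + k ≤ i := by omega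
      have hj : p + k + 1 ∉ P' := by
        intro hmem
        have := hpmax ⟨hmem, by omega⟩
        omega
      have hjP : p + k + 1 ∉ P := fun h => hj (hPP' h)
      rw [hP] at hjP
      simp only [Finset.mem_filter, Finset.mem_range, not_and, not_or, not_not] at hjP
      have h2 := (hjP (by omega)).2
      simp only [Nat.add_sub_cancel] at h2
      show π (p + k + 1) = π p + (k + 1)
      rw [h2, ih hk']
      omega
  have ha : π i = π p + (i - p) := by
    have h := key (i - p) (by omega)
    have hpi' : p + (i - p) = i := by omega
    rw [hpi'] at h; omega
  have hπin : π i < n := hπ.mapsTo hi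
  have hb2 : π i < qe := by
    by_contra h
    push_neg at h
    have hqen : qe ∈ Q' := by
      rcases hqeQ with h' | h'
      · exact h'
      · omega
    rw [hQ'] at hqen
    obtain ⟨p', hp'P', hp'⟩ := Finset.mem_image.mp hqen
    have hp'n : p' < n := hP'sub p' hp'P'
    set k := qe - π p with hk
    have hk1 : 1 ≤ k := by omega
    have hk2 : k ≤ i - p := by omega
    have hπpk : π (p + k) = π p + k := key k (by omega)
    have heq : π p' = π (p + k) := by omega
    have : p' = p + k := hπ.injOn (by simp; omega) (by simp; omega) heq
    have := hpmax ⟨hp'P', by omega⟩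
    omega
  refine ⟨ha, by omega, hb2, ?_⟩
  have hqsmem : π p ∈ insert n Q' := by
    apply Finset.mem_insert_of_mem
    rw [hQ']; exact Finset.mem_image_of_mem π hpP'
  have hqemem : qe ∈ insert n Q' := by
    rcases hqeQ with h' | h'
    · exact Finset.mem_insert_of_mem h'
    · simp [h']
  have hgap : ∀ x ∈ insert n Q', ¬(π p < x ∧ x < qe) := by
    intro x hx ⟨h1, h2⟩
    have hx' : x ∈ Q' ∨ x = n := by
      rcases Finset.mem_insert.mp hx with h | h
      · right; exact h
      · left; exact h
    have := hqemin ⟨hx', h1⟩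
    omega
  have hcard := hbal (π p) hqsmem qe hqemem hqegt hgap
  refine lt_of_le_of_lt (Finset.card_le_card ?_) hcard
  intro x hx
  simp only [Finset.mem_filter] at hx ⊢
  exact ⟨hx.1, hx.2.1, by omega⟩
end

section
/- (Kasai-type lemma.) For every i ∈ [0, n−2], PLCP[i+1] ≥ PLCP[i] − 1. Equivalently, the function i ↦ i + PLCP[i] is nondecreasing, so in the longest-common-prefix computation at most PLCP[i] − 1 symbol comparisons can be skipped when advancing from position i to position i+1. -/
/-- The suffix `T[i..n−1]` of a text of length `n`, as a list. -/
def sfx {α : Type*} (T : ℕ → α) (n i : ℕ) : List α :=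
  (List.range (n - i)).map (fun k => T (i + k))

/-- Length of the longest common prefix of two strings (as lists). -/
def lcp {α : Type*} [DecidableEq α] : List α → List α → ℕ
  | a :: as, b :: bs => if a = b then lcp as bs + 1 else 0
  | _, _ => 0

theorem sfx_cons {α : Type*} (T : ℕ → α) {n i : ℕ} (h : i < n) :
    sfx T n i = T i :: sfx T n (i + 1) := by
  unfold sfx
  have hh : n - i = (n - (i + 1)) + 1 := by omega
  rw [hh, List.range_succ_eq_map, List.map_cons, List.map_map]
  simp only [Nat.add_zero]
  have hfun : (fun k => T (i + k)) ∘ Nat.succ = fun k => T (i + 1 + k) := by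
    funext k
    show T (i + (k + 1)) = T (i + 1 + k)
    congr 1
    omega
  rw [hfun]

theorem lcp_le_length_left {α : Type*} [DecidableEq α] :
    ∀ x y : List α, lcp x y ≤ x.length
  | [], _ => by simp [lcp]
  | _ :: _, [] => by simp [lcp]
  | a :: as, b :: bs => by
    simp only [lcp, List.length_cons]
    split
    · exact Nat.add_le_add_right (lcp_le_length_left as bs) 1
    · omega

theorem lcp_pos_heads {α : Type*} [DecidableEq α] {x y : List α}
    (h : 1 ≤ lcp x y) :
    ∃ a as bs, x = a :: as ∧ y = a :: bs ∧ lcp x y = lcp as bs + 1 := by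
  match x, y with
  | [], _ => simp [lcp] at h
  | _ :: _, [] => simp [lcp] at h
  | a :: as, b :: bs =>
    by_cases hab : a = b
    · subst hab
      exact ⟨a, as, bs, rfl, rfl, by simp [lcp]⟩
    · simp [lcp, hab] at h

/-- Key monotonicity: if `x <lex y <lex z`, then `lcp x z ≤ lcp y z`. -/
theorem lcp_mono_lex {α : Type*} [LinearOrder α] :
    ∀ (x y z : List α), List.Lex (· < ·) x y → List.Lex (· < ·) y z →
      lcp x z ≤ lcp y z
  | [], _, _, _, _ => by simp [lcp]
  | _ :: _, _, [], _, _ => by simp [lcp]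
  | a :: as, y, c :: cs, hxy, hyz => by
    by_cases hac : a = c
    · subst hac
      -- y must be a :: bs with Lex as bs and Lex bs cs
      cases hxy with
      | cons hasbs =>
        rename_i bs
        cases hyz with
        | cons hbscs =>
          simp only [lcp, if_pos rfl]
          exact Nat.add_le_add_right (lcp_mono_lex as bs cs hasbs hbscs) 1
        | rel hr => exact absurd hr (lt_irrefl a)
      | rel hr =>
        rename_i b bs
        cases hyz with
        | cons _ => exact absurd hr (lt_irrefl a)
        | rel hr' => exact absurd (hr.trans hr') (lt_irrefl a)
    · simp [lcp, hac]

/-- Kasai-type lemma: `PLCP[i+1] ≥ PLCP[i] − 1` for every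
`i ∈ [0, n−2]`; equivalently, `i ↦ i + PLCP[i]` is nondecreasing on `[0,n)`. -/
theorem plcp_kasai_lemma
    {α : Type*} [LinearOrder α] (n : ℕ) (hn : 1 ≤ n) (T : ℕ → α)
    (hsent : ∀ i, i < n - 1 → T (n - 1) < T i)
    (SA ISA : ℕ → ℕ)
    (hSA : ∀ i, i < n → SA i < n)
    (hmono : ∀ i j, i < j → j < n → sfx T n (SA i) < sfx T n (SA j))
    (hISA : ∀ i, i < n → ISA i < n ∧ ISA (SA i) = i ∧ SA (ISA i) = i)
    (PLCP : ℕ → ℕ)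
    (hPLCP : ∀ i, i < n → PLCP i =
      if ISA i = 0 then 0
      else lcp (sfx T n (SA (ISA i - 1))) (sfx T n (SA (ISA i)))) :
    (∀ i, i + 1 < n → PLCP i ≤ PLCP (i + 1) + 1) ∧
    (∀ i j, i ≤ j → j < n → i + PLCP i ≤ j + PLCP j) := by
  have hlen : ∀ i, (sfx T n i).length = n - i := by
    intro i; simp [sfx]
  -- ranks reflect lexicographic order
  have rank_lt : ∀ a b, a < n → b < n →
      sfx T n (SA a) < sfx T n (SA b) → a < b := by
    intro a b ha hb h
    by_contra hab
    push_neg at hab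
    rcases lt_or_eq_of_le hab with h' | h'
    · exact absurd (h.trans (hmono b a h' ha)) (lt_irrefl _)
    · subst h'; exact absurd h (lt_irrefl _)
  have part1 : ∀ i, i + 1 < n → PLCP i ≤ PLCP (i + 1) + 1 := by
    intro i hi1
    have hi : i < n := by omega
    obtain ⟨hr, -, hSAr⟩ := hISA i hi
    set r := ISA i with hrdef
    by_cases hr0 : r = 0
    · rw [hPLCP i hi, ← hrdef, if_pos hr0]; omega
    · rw [hPLCP i hi, ← hrdef, if_neg hr0]
      set j := SA (r - 1) with hjdef
      by_cases hsmall : lcp (sfx T n j) (sfx T n (SA r)) ≤ 1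
      · omega
      · push_neg at hsmall
        have hL2 : 2 ≤ lcp (sfx T n j) (sfx T n (SA r)) := hsmall
        rw [hSAr] at hL2 ⊢
        have hjn : j < n := hSA _ (by omega)
        -- lengths are at least 2
        have hlenj : 2 ≤ (sfx T n j).length :=
          le_trans hL2 (lcp_le_length_left _ _)
        have hj1 : j + 1 < n := by rw [hlen] at hlenj; omega
        -- split off heads
        obtain ⟨a, as, bs, hx, hy, hrec⟩ := lcp_pos_heads (by omega : 1 ≤ lcp (sfx T n j) (sfx T n i))
        rw [sfx_cons T hjn] at hx
        rw [sfx_cons T hi] at hy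
        have has : as = sfx T n (j + 1) := ((List.cons_eq_cons.mp hx).2).symm
        have hbs : bs = sfx T n (i + 1) := ((List.cons_eq_cons.mp hy).2).symm
        have haTj : a = T j := ((List.cons_eq_cons.mp hx).1).symm
        have haTi : a = T i := ((List.cons_eq_cons.mp hy).1).symm
        -- suffix j < suffix i strictly
        have hlt : sfx T n j < sfx T n i := by
          have := hmono (r - 1) r (by omega) hr
          rwa [hSAr] at this
        -- deduce suffix (j+1) < suffix (i+1)
        have hlt1 : List.Lex (· < ·) (sfx T n (j + 1)) (sfx T n (i + 1)) := by
          rw [sfx_cons T hjn, sfx_cons T hi] at hlt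
          have hlt' : List.Lex (· < ·) (T j :: sfx T n (j + 1)) (T i :: sfx T n (i + 1)) := hlt
          rw [← haTj, ← haTi] at hlt'
          cases hlt' with
          | cons h => exact h
          | rel h => exact absurd h (lt_irrefl a)
        -- ranks of j+1 and i+1
        obtain ⟨hp, -, hSAp⟩ := hISA (j + 1) hj1
        obtain ⟨hq, -, hSAq⟩ := hISA (i + 1) hi1
        set p := ISA (j + 1) with hpdef
        set q := ISA (i + 1) with hqdef
        have hpq : p < q := by
          apply rank_lt p q hp hq
          rw [hSAp, hSAq]
          exact hlt1
        have hq0 : q ≠ 0 := by omega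
        -- PLCP (i+1)
        rw [hPLCP (i + 1) hi1, ← hqdef, if_neg hq0, hSAq]
        -- sfx (j+1) ≤ sfx (SA (q-1)) < sfx (i+1)
        have hk_lt : List.Lex (· < ·) (sfx T n (SA (q - 1))) (sfx T n (i + 1)) := by
          have := hmono (q - 1) q (by omega) hq
          rwa [hSAq] at this
        have hkey : lcp (sfx T n (j + 1)) (sfx T n (i + 1)) ≤
            lcp (sfx T n (SA (q - 1))) (sfx T n (i + 1)) := by
          rcases lt_or_eq_of_le (by omega : p ≤ q - 1) with hplt | hpeq
          · have hjk : List.Lex (· < ·) (sfx T n (j + 1)) (sfx T n (SA (q - 1))) := by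
              have := hmono p (q - 1) hplt (by omega)
              rwa [hSAp] at this
            exact lcp_mono_lex _ _ _ hjk hk_lt
          · rw [← hpeq, hSAp]
        -- finish
        rw [hrec, has, hbs]
        omega
  refine ⟨part1, ?_⟩
  intro i j hij hj
  induction j with
  | zero =>
    interval_cases i
    exact le_rfl
  | succ m ih =>
    rcases Nat.lt_or_ge i (m + 1) with h | h
    · have h1 : i + PLCP i ≤ m + PLCP m := ih (by omega) (by omega)
      have h2 : PLCP m ≤ PLCP (m + 1) + 1 := part1 m hj
      omega
    · have : i = m + 1 := by omega
      subst this; exact le_rfl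
end

section
/- (φ is contiguous at reducible positions.) For every i ∈ [1, n) such that ISA[i] ≥ 1 and BWT[ISA[i]] = BWT[ISA[i]−1], it holds that φ(i) = φ(i−1) + 1. Consequently, the breakpoint set of φ, namely {0} ∪ {i ∈ [1, n) : φ(i) ≠ φ(i−1) + 1}, is contained in {SA[k] : k = 0 or BWT[k] ≠ BWT[k−1]}; in particular φ has at most r input intervals, where r is the number of maximal equal-character runs of BWT. -/
/-!
Let `k = ISA[q] ≥ 1` with `BWT[k] = BWT[k−1] = c` and `p = SA[k−1] = φ(q)`. The sentinel forces
`p, q ≥ 1`, and then `T[p−1] = T[q−1] = c`. Prepending `c` preserves the order of suffixes, and a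
suffix strictly between `c·T[p..]` and `c·T[q..]` would have to be `c·T[s..]` with `T[s..]`
strictly between `T[p..]` and `T[q..]`, which are adjacent in `SA`. Hence `T[p−1..]` and
`T[q−1..]` are adjacent as well, i.e. `φ(q−1) = p − 1 = φ(q) − 1`.
-/

namespace List

variable {α : Type*} [Preorder α]

theorem exists_eq_cons_of_cons_lt_of_lt_cons {c : α} {x y w : List α}
    (hx : c :: x < w) (hy : w < c :: y) : ∃ z, w = c :: z ∧ x < z ∧ z < y := by
  cases w with
  | nil => exact absurd hx (not_lt_nil _)
  | cons a z =>
    rw [cons_lt_cons_iff] at hx hy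
    rcases hx with hca | ⟨rfl, hxz⟩
    · rcases hy with hac | ⟨rfl, -⟩
      · exact absurd (hca.trans hac) (lt_irrefl _)
      · exact absurd hca (lt_irrefl _)
    · rcases hy with hcc | ⟨-, hzy⟩
      · exact absurd hcc (lt_irrefl _)
      · exact ⟨z, rfl, hxz, hzy⟩

end List

section Suffixes

variable {α : Type*} {T : ℕ → α} {n : ℕ}

theorem sfx_of_le {i : ℕ} (h : n ≤ i) : sfx T n i = [] := by
  simp [sfx, Nat.sub_eq_zero_of_le h]

theorem sfx_of_lt {i : ℕ} (h : i < n) : sfx T n i = T i :: sfx T n (i + 1) := by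
  rw [sfx, show n - i = n - (i + 1) + 1 by omega, List.range_succ_eq_map, List.map_cons,
    List.map_map, sfx]
  congr 2
  funext k
  simp only [Function.comp, Nat.add_assoc, Nat.add_comm 1 k]

variable [LinearOrder α]

def SfxAdjacent (T : ℕ → α) (n p q : ℕ) : Prop :=
  sfx T n p < sfx T n q ∧ ∀ s, sfx T n p < sfx T n s → ¬ sfx T n s < sfx T n q

theorem SfxAdjacent.of_succ {p q : ℕ} (hp : p < n) (hq : q < n) (hc : T p = T q)
    (h : SfxAdjacent T n (p + 1) (q + 1)) : SfxAdjacent T n p q := by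
  rw [SfxAdjacent, sfx_of_lt hp, sfx_of_lt hq, hc]
  refine ⟨List.cons_lt_cons_self.mpr h.1, fun s hps hsq => ?_⟩
  obtain ⟨z, hs, hpz, hzq⟩ := List.exists_eq_cons_of_cons_lt_of_lt_cons hps hsq
  have hsn : s < n := by
    by_contra! hns
    rw [sfx_of_le hns] at hs
    exact List.cons_ne_nil _ _ hs.symm
  rw [sfx_of_lt hsn, List.cons.injEq] at hs
  rw [← hs.2] at hpz hzq
  exact h.2 (s + 1) hpz hzq

end Suffixes

structure IsSuffixArray {α : Type*} [LinearOrder α] (T : ℕ → α) (n : ℕ) (SA ISA : ℕ → ℕ) :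
    Prop where
  sa_lt : ∀ i, i < n → SA i < n
  sfx_lt : ∀ i j, i < j → j < n → sfx T n (SA i) < sfx T n (SA j)
  isa : ∀ i, i < n → ISA i < n ∧ ISA (SA i) = i ∧ SA (ISA i) = i

namespace IsSuffixArray

variable {α : Type*} [LinearOrder α] {T : ℕ → α} {n : ℕ} {SA ISA : ℕ → ℕ}

theorem isa_lt_isa_iff (h : IsSuffixArray T n SA ISA) {p q : ℕ} (hp : p < n) (hq : q < n) :
    ISA p < ISA q ↔ sfx T n p < sfx T n q := by
  obtain ⟨hpn, -, hSAp⟩ := h.isa p hp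
  obtain ⟨hqn, -, hSAq⟩ := h.isa q hq
  constructor
  · intro hlt
    simpa only [hSAp, hSAq] using h.sfx_lt _ _ hlt hqn
  · intro hlt
    by_contra! hle
    rcases hle.lt_or_eq with hgt | heq
    · have hqp := h.sfx_lt _ _ hgt hpn
      rw [hSAp, hSAq] at hqp
      exact lt_asymm hlt hqp
    · rw [← hSAp, ← hSAq, heq] at hlt
      exact lt_irrefl _ hlt

theorem sfxAdjacent_iff (h : IsSuffixArray T n SA ISA) {p q : ℕ} (hp : p < n) (hq : q < n) :
    SfxAdjacent T n p q ↔ ISA q = ISA p + 1 := by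
  rw [SfxAdjacent, ← h.isa_lt_isa_iff hp hq]
  constructor
  · rintro ⟨hlt, hnone⟩
    by_contra hne
    have hm : ISA p + 1 < n := by have := (h.isa q hq).1; omega
    obtain ⟨-, hISAm, -⟩ := h.isa _ hm
    refine hnone (SA (ISA p + 1)) ?_ ?_
    · rw [← h.isa_lt_isa_iff hp (h.sa_lt _ hm), hISAm]; omega
    · rw [← h.isa_lt_isa_iff (h.sa_lt _ hm) hq, hISAm]; omega
  · intro hsucc
    refine ⟨by omega, fun s hps hsq => ?_⟩
    have hsn : s < n := by
      by_contra! hns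
      rw [sfx_of_le hns] at hps
      exact List.not_lt_nil _ hps
    rw [← h.isa_lt_isa_iff hp hsn] at hps
    rw [← h.isa_lt_isa_iff hsn hq] at hsq
    omega

end IsSuffixArray

theorem Nat.add_sub_one_mod_of_pos {p n : ℕ} (hp : 0 < p) (hpn : p < n) :
    (p + n - 1) % n = p - 1 := by
  rw [show p + n - 1 = p - 1 + n by omega, Nat.add_mod_right, Nat.mod_eq_of_lt (by omega)]

section BWT

variable {α : Type*} [LinearOrder α] {T : ℕ → α} {n : ℕ} {SA ISA : ℕ → ℕ} {BWT : ℕ → α}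

theorem bwt_isa_of_pos (h : IsSuffixArray T n SA ISA)
    (hBWT : ∀ k, k < n → BWT k = T ((SA k + n - 1) % n)) {p : ℕ} (hp : 0 < p) (hpn : p < n) :
    BWT (ISA p) = T (p - 1) := by
  obtain ⟨hk, -, hSAk⟩ := h.isa p hpn
  rw [hBWT _ hk, hSAk, Nat.add_sub_one_mod_of_pos hp hpn]

theorem bwt_isa_zero (h : IsSuffixArray T n SA ISA)
    (hBWT : ∀ k, k < n → BWT k = T ((SA k + n - 1) % n)) (hn : 0 < n) :
    BWT (ISA 0) = T (n - 1) := by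
  obtain ⟨hk, -, hSAk⟩ := h.isa 0 hn
  rw [hBWT _ hk, hSAk, Nat.zero_add, Nat.mod_eq_of_lt (Nat.sub_lt hn Nat.one_pos)]

/-- `BWT[ISA[0]]` is the sentinel, which occurs nowhere else in `BWT`. -/
theorem pos_of_bwt_isa_eq (hsent : ∀ i, i < n - 1 → T (n - 1) < T i)
    (h : IsSuffixArray T n SA ISA) (hBWT : ∀ k, k < n → BWT k = T ((SA k + n - 1) % n))
    {p q : ℕ} (hp : p < n) (hq : q < n) (hpq : p ≠ q) (heq : BWT (ISA p) = BWT (ISA q)) :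
    0 < p := by
  by_contra! hp0
  obtain rfl : p = 0 := Nat.le_zero.mp hp0
  rw [bwt_isa_zero h hBWT hp, bwt_isa_of_pos h hBWT (by omega) hq] at heq
  exact (hsent (q - 1) (by omega)).ne heq

theorem phi_eq_of_isa_eq_succ (h : IsSuffixArray T n SA ISA) {φ : ℕ → ℕ}
    (hφ : ∀ k, k < n → φ (SA k) = SA ((k + n - 1) % n)) {p q : ℕ} (hp : p < n) (hq : q < n)
    (hpq : ISA q = ISA p + 1) : φ q = p := by
  obtain ⟨hk, -, hSAk⟩ := h.isa q hq
  rw [← hSAk, hφ _ hk, Nat.add_sub_one_mod_of_pos (by omega) hk, hpq, Nat.add_sub_cancel,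
    (h.isa p hp).2.2]

theorem pos_and_phi_eq_succ_of_bwt_eq (hsent : ∀ i, i < n - 1 → T (n - 1) < T i)
    (h : IsSuffixArray T n SA ISA) (hBWT : ∀ k, k < n → BWT k = T ((SA k + n - 1) % n))
    {φ : ℕ → ℕ} (hφ : ∀ k, k < n → φ (SA k) = SA ((k + n - 1) % n)) {q : ℕ} (hq : q < n)
    (hk : ISA q ≠ 0) (hrun : BWT (ISA q) = BWT (ISA q - 1)) : 0 < q ∧ φ q = φ (q - 1) + 1 := by
  obtain ⟨hkn, -, -⟩ := h.isa q hq
  set p := SA (ISA q - 1)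
  have hp : p < n := h.sa_lt _ (by omega)
  have hadj : ISA q = ISA p + 1 := by rw [(h.isa _ (by omega)).2.1]; omega
  have hrun' : BWT (ISA p) = BWT (ISA q) := by rw [(h.isa _ (by omega)).2.1, hrun]
  have hpq : p ≠ q := fun hpq => by rw [hpq] at hadj; omega
  have hp0 : 0 < p := pos_of_bwt_isa_eq hsent h hBWT hp hq hpq hrun'
  have hq0 : 0 < q := pos_of_bwt_isa_eq hsent h hBWT hq hp hpq.symm hrun'.symm
  have hc : T (p - 1) = T (q - 1) := by
    rw [← bwt_isa_of_pos h hBWT hp0 hp, ← bwt_isa_of_pos h hBWT hq0 hq, hrun']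
  have hadj' : ISA (q - 1) = ISA (p - 1) + 1 := by
    rw [← h.sfxAdjacent_iff (by omega) (by omega)]
    refine SfxAdjacent.of_succ (by omega) (by omega) hc ?_
    rw [Nat.sub_add_cancel hp0, Nat.sub_add_cancel hq0, h.sfxAdjacent_iff hp hq]
    exact hadj
  refine ⟨hq0, ?_⟩
  rw [phi_eq_of_isa_eq_succ h hφ hp hq hadj, phi_eq_of_isa_eq_succ h hφ (by omega) (by omega) hadj']
  omega

end BWT

theorem phi_contiguous_at_reducible_general
    {α : Type*} [LinearOrder α] (n : ℕ) (T : ℕ → α)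
    (hsent : ∀ i, i < n - 1 → T (n - 1) < T i)
    (SA ISA : ℕ → ℕ)
    (hSA : ∀ i, i < n → SA i < n)
    (hmono : ∀ i j, i < j → j < n → sfx T n (SA i) < sfx T n (SA j))
    (hISA : ∀ i, i < n → ISA i < n ∧ ISA (SA i) = i ∧ SA (ISA i) = i)
    (BWT : ℕ → α)
    (hBWT : ∀ k, k < n → BWT k = T ((SA k + n - 1) % n))
    (φ : ℕ → ℕ)
    (hφ : ∀ k, k < n → φ (SA k) = SA ((k + n - 1) % n)) :
    (∀ i, 1 ≤ i → i < n → 1 ≤ ISA i → BWT (ISA i) = BWT (ISA i - 1) →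
      φ i = φ (i - 1) + 1) ∧
    ((Finset.range n).filter (fun i => i = 0 ∨ φ i ≠ φ (i - 1) + 1)) ⊆
      ((Finset.range n).filter (fun k => k = 0 ∨ BWT k ≠ BWT (k - 1))).image SA ∧
    ((Finset.range n).filter (fun i => i = 0 ∨ φ i ≠ φ (i - 1) + 1)).card ≤
      ((Finset.range n).filter (fun k => k = 0 ∨ BWT k ≠ BWT (k - 1))).card := by
  have h : IsSuffixArray T n SA ISA := ⟨hSA, hmono, hISA⟩
  have key := fun q => pos_and_phi_eq_succ_of_bwt_eq hsent h hBWT hφ (q := q)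
  have hsub : (Finset.range n).filter (fun i => i = 0 ∨ φ i ≠ φ (i - 1) + 1) ⊆
      ((Finset.range n).filter (fun k => k = 0 ∨ BWT k ≠ BWT (k - 1))).image SA := by
    intro i hi
    rw [Finset.mem_filter, Finset.mem_range] at hi
    obtain ⟨hkn, -, hSAk⟩ := hISA i hi.1
    refine Finset.mem_image.mpr ⟨ISA i, Finset.mem_filter.mpr ⟨Finset.mem_range.mpr hkn, ?_⟩, hSAk⟩
    by_contra! hrun
    obtain ⟨hi0, hφi⟩ := key i hi.1 hrun.1 hrun.2
    exact hi.2.elim (by omega) (· hφi)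
  exact ⟨fun i _ hin hk hrun => (key i hin (by omega) hrun).2, hsub,
    (Finset.card_le_card hsub).trans Finset.card_image_le⟩

/-- `φ` is contiguous at reducible positions: if `ISA[i] ≥ 1`
and `BWT[ISA[i]] = BWT[ISA[i]−1]`, then `φ(i) = φ(i−1) + 1`. Consequently the
breakpoint set of `φ` is contained in `{SA[k] : k = 0 or BWT[k] ≠ BWT[k−1]}`;
in particular `φ` has at most `r` input intervals, where `r` is the number of
maximal equal-character runs of `BWT`. -/
theorem phi_contiguous_at_reducible
    {α : Type*} [LinearOrder α] (n : ℕ) (hn : 1 ≤ n) (T : ℕ → α)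
    (hsent : ∀ i, i < n - 1 → T (n - 1) < T i)
    (SA ISA : ℕ → ℕ)
    (hSA : ∀ i, i < n → SA i < n)
    (hmono : ∀ i j, i < j → j < n → sfx T n (SA i) < sfx T n (SA j))
    (hISA : ∀ i, i < n → ISA i < n ∧ ISA (SA i) = i ∧ SA (ISA i) = i)
    (BWT : ℕ → α)
    (hBWT : ∀ k, k < n → BWT k = T ((SA k + n - 1) % n))
    (φ : ℕ → ℕ)
    (hφ : ∀ k, k < n → φ (SA k) = SA ((k + n - 1) % n)) :
    (∀ i, 1 ≤ i → i < n → 1 ≤ ISA i → BWT (ISA i) = BWT (ISA i - 1) →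
      φ i = φ (i - 1) + 1) ∧
    ((Finset.range n).filter (fun i => i = 0 ∨ φ i ≠ φ (i - 1) + 1)) ⊆
      ((Finset.range n).filter (fun k => k = 0 ∨ BWT k ≠ BWT (k - 1))).image SA ∧
    ((Finset.range n).filter (fun i => i = 0 ∨ φ i ≠ φ (i - 1) + 1)).card ≤
      ((Finset.range n).filter (fun k => k = 0 ∨ BWT k ≠ BWT (k - 1))).card :=
  phi_contiguous_at_reducible_general n T hsent SA ISA hSA hmono hISA BWT hBWT φ hφ
end

section
/- (Recovering PLCP from its irreducible values.) Let I = {i ∈ [0, n) : PLCP[i] is irreducible}. Then 0 ∈ I, and for every i ∈ [0, n), letting p = max{j ∈ I : j ≤ i} (which exists since 0 ∈ I), it holds that PLCP[i] = PLCP[p] − (i − p). -/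
section Strings

variable {α : Type*}

theorem lcp_nil_left [DecidableEq α] (v : List α) : lcp [] v = 0 := by
  cases v <;> rfl

theorem lcp_cons_self [DecidableEq α] (a : α) (u v : List α) :
    lcp (a :: u) (a :: v) = lcp u v + 1 := by
  simp [lcp]

theorem lcp_le_lcp_of_lt_of_lt [LinearOrder α] :
    ∀ {a b c : List α}, a < b → b < c → lcp a c ≤ lcp b c
  | [], _, _, _, _ => by simp [lcp_nil_left]
  | _ :: _, [], _, hab, _ => absurd hab (List.not_lt_nil _)
  | _, _, [], _, hbc => absurd hbc (List.not_lt_nil _)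
  | x :: as, y :: bs, z :: cs, hab, hbc => by
    by_cases hxz : x = z
    · subst hxz
      rcases List.cons_lt_cons_iff.1 hab with hxy | ⟨rfl, has⟩
      · rcases List.cons_lt_cons_iff.1 hbc with hyx | ⟨rfl, -⟩
        · exact absurd (hxy.trans hyx) (lt_irrefl _)
        · exact absurd hxy (lt_irrefl _)
      · rcases List.cons_lt_cons_iff.1 hbc with hxx | ⟨-, hbs⟩
        · exact absurd hxx (lt_irrefl _)
        · rw [lcp_cons_self, lcp_cons_self]
          exact Nat.succ_le_succ (lcp_le_lcp_of_lt_of_lt has hbs)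
    · simp [lcp, hxz]

theorem sfx_eq_cons (T : ℕ → α) {n i : ℕ} (hi : i < n) :
    sfx T n i = T i :: sfx T n (i + 1) := by
  rw [sfx, show n - i = n - (i + 1) + 1 by omega, List.range_succ_eq_map, List.map_cons,
    List.map_map, sfx]
  congr 1
  exact List.map_congr_left fun k _ => by
    simp only [Function.comp_apply, Nat.succ_eq_add_one, Nat.add_right_comm, Nat.add_assoc]

end Strings

structure IsSuffixArray_s14 {α : Type*} [LinearOrder α] (T : ℕ → α) (n : ℕ) (SA ISA : ℕ → ℕ) :
    Prop where
  sa_lt : ∀ k < n, SA k < n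
  sfx_lt_sfx : ∀ k l, k < l → l < n → sfx T n (SA k) < sfx T n (SA l)
  isa_lt : ∀ i < n, ISA i < n
  isa_sa : ∀ k < n, ISA (SA k) = k
  sa_isa : ∀ i < n, SA (ISA i) = i

def plcp {α : Type*} [DecidableEq α] (T : ℕ → α) (n : ℕ) (SA ISA : ℕ → ℕ) (i : ℕ) : ℕ :=
  if ISA i = 0 then 0 else lcp (sfx T n (SA (ISA i - 1))) (sfx T n i)

namespace IsSuffixArray_s14

variable {α : Type*} [LinearOrder α] {T : ℕ → α} {n : ℕ} {SA ISA : ℕ → ℕ}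
  (h : IsSuffixArray_s14 T n SA ISA)
include h

theorem sfx_lt_sfx_of_isa_lt {i j : ℕ} (hi : i < n) (hj : j < n) (hij : ISA i < ISA j) :
    sfx T n i < sfx T n j := by
  have hlt := h.sfx_lt_sfx _ _ hij (h.isa_lt j hj)
  rwa [h.sa_isa i hi, h.sa_isa j hj] at hlt

theorem isa_lt_isa_of_sfx_lt {i j : ℕ} (hi : i < n) (hj : j < n)
    (hij : sfx T n i < sfx T n j) : ISA i < ISA j := by
  by_contra hji
  rcases (not_lt.1 hji).eq_or_lt with he | hlt
  · have hij' : i = j := by rw [← h.sa_isa i hi, ← he, h.sa_isa j hj]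
    exact lt_irrefl _ (hij' ▸ hij)
  · exact lt_asymm hij (h.sfx_lt_sfx_of_isa_lt hj hi hlt)

theorem sa_isa_pred_ne {i : ℕ} (hi : i < n) (hr : ISA i ≠ 0) : SA (ISA i - 1) ≠ i := by
  intro he
  have hisa := h.isa_sa (ISA i - 1) (by have := h.isa_lt i hi; omega)
  rw [he] at hisa
  omega

theorem sfx_sa_isa_pred_lt {i : ℕ} (hi : i < n) (hr : ISA i ≠ 0) :
    sfx T n (SA (ISA i - 1)) < sfx T n i := by
  have hlt := h.sfx_lt_sfx (ISA i - 1) (ISA i) (by omega) (h.isa_lt i hi)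
  rwa [h.sa_isa i hi] at hlt

theorem lcp_le_plcp {x j : ℕ} (hx : x < n) (hj : j < n) (hxj : sfx T n x < sfx T n j) :
    lcp (sfx T n x) (sfx T n j) ≤ plcp T n SA ISA j := by
  have hr := h.isa_lt_isa_of_sfx_lt hx hj hxj
  rw [plcp, if_neg (by omega)]
  rcases (Nat.le_sub_one_of_lt hr).eq_or_lt with he | hlt
  · rw [← he, h.sa_isa x hx]
  · have hx' := h.sfx_lt_sfx _ _ hlt (by have := h.isa_lt j hj; omega)
    rw [h.sa_isa x hx] at hx'
    exact lcp_le_lcp_of_lt_of_lt hx' (h.sfx_sa_isa_pred_lt hj (by omega))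

theorem plcp_le_plcp_succ_add_one {i : ℕ} (hi : i + 1 < n) :
    plcp T n SA ISA i ≤ plcp T n SA ISA (i + 1) + 1 := by
  by_cases hr : ISA i = 0
  · simp [plcp, hr]
  have hq : SA (ISA i - 1) < n := h.sa_lt _ (by have := h.isa_lt i (by omega); omega)
  have hlt := h.sfx_sa_isa_pred_lt (by omega) hr
  rw [plcp, if_neg hr]
  rw [sfx_eq_cons T hq, sfx_eq_cons T (by omega : i < n)] at hlt ⊢
  by_cases hqi : T (SA (ISA i - 1)) = T i
  · rw [hqi, lcp_cons_self]
    rw [hqi, List.cons_lt_cons_self] at hlt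
    rcases (Nat.succ_le_of_lt hq).eq_or_lt with hqn | hqn
    · simp [← hqn, sfx, lcp_nil_left]
    · exact Nat.succ_le_succ (h.lcp_le_plcp hqn hi hlt)
  · simp [lcp, hqi]

theorem plcp_succ_add_one_le {i : ℕ} (hi : i + 1 < n) (hr : ISA (i + 1) ≠ 0)
    (hq : 0 < SA (ISA (i + 1) - 1)) (hc : T (SA (ISA (i + 1) - 1) - 1) = T i) :
    plcp T n SA ISA (i + 1) + 1 ≤ plcp T n SA ISA i := by
  set q := SA (ISA (i + 1) - 1)
  have hqn : q < n := h.sa_lt _ (by have := h.isa_lt (i + 1) hi; omega)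
  have hsfx : sfx T n (q - 1) = T i :: sfx T n q := by
    rw [sfx_eq_cons T (by omega : q - 1 < n), Nat.sub_add_cancel hq, hc]
  have hlt : sfx T n (q - 1) < sfx T n i := by
    rw [hsfx, sfx_eq_cons T (by omega : i < n), List.cons_lt_cons_self]
    exact h.sfx_sa_isa_pred_lt hi hr
  calc plcp T n SA ISA (i + 1) + 1 = lcp (sfx T n (q - 1)) (sfx T n i) := by
        rw [hsfx, sfx_eq_cons T (by omega : i < n), lcp_cons_self, plcp, if_neg hr]
    _ ≤ plcp T n SA ISA i := h.lcp_le_plcp (by omega) (by omega) hlt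

theorem plcp_succ_add_one_eq {i : ℕ} (hi : i + 1 < n) (hr : ISA (i + 1) ≠ 0)
    (hq : 0 < SA (ISA (i + 1) - 1)) (hc : T (SA (ISA (i + 1) - 1) - 1) = T i) :
    plcp T n SA ISA (i + 1) + 1 = plcp T n SA ISA i :=
  le_antisymm (h.plcp_succ_add_one_le hi hr hq hc) (h.plcp_le_plcp_succ_add_one hi)

section Bwt

variable {BWT : ℕ → α} (hBWT : ∀ k < n, BWT k = T ((SA k + n - 1) % n))
  (hsent : ∀ i < n - 1, T (n - 1) < T i)
include hBWT

theorem bwt_eq_of_pos {k : ℕ} (hk : k < n) (hpos : 0 < SA k) : BWT k = T (SA k - 1) := by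
  have hSA := h.sa_lt k hk
  rw [hBWT k hk, show SA k + n - 1 = SA k - 1 + n by omega, Nat.add_mod_right,
    Nat.mod_eq_of_lt (by omega)]

include hsent

theorem bwt_eq_last_iff {k : ℕ} (hk : k < n) : BWT k = T (n - 1) ↔ SA k = 0 := by
  refine ⟨fun hlast => ?_, fun h0 => ?_⟩
  · by_contra hpos
    have hsent' := hsent (SA k - 1) (by have := h.sa_lt k hk; omega)
    rw [← h.bwt_eq_of_pos hBWT hk (Nat.pos_of_ne_zero hpos), hlast] at hsent'
    exact lt_irrefl _ hsent'
  · rw [hBWT k hk, h0, Nat.zero_add, Nat.mod_eq_of_lt (by omega)]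

theorem isa_zero_irreducible (hn : 0 < n) : ISA 0 = 0 ∨ BWT (ISA 0) ≠ BWT (ISA 0 - 1) := by
  refine or_iff_not_imp_left.2 fun hr hb => h.sa_isa_pred_ne hn hr ?_
  have hr' := h.isa_lt 0 hn
  rw [← h.bwt_eq_last_iff hBWT hsent (by omega), ← hb,
    h.bwt_eq_last_iff hBWT hsent hr', h.sa_isa 0 hn]

theorem plcp_succ_add_one_eq_of_reducible {i : ℕ} (hi : i + 1 < n) (hr : ISA (i + 1) ≠ 0)
    (hb : BWT (ISA (i + 1)) = BWT (ISA (i + 1) - 1)) :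
    plcp T n SA ISA (i + 1) + 1 = plcp T n SA ISA i := by
  have hr' := h.isa_lt (i + 1) hi
  have hsa := h.sa_isa (i + 1) hi
  have hq : 0 < SA (ISA (i + 1) - 1) := by
    rw [Nat.pos_iff_ne_zero, Ne, ← h.bwt_eq_last_iff hBWT hsent (by omega), ← hb,
      h.bwt_eq_last_iff hBWT hsent hr', hsa]
    omega
  refine h.plcp_succ_add_one_eq hi hr hq ?_
  rw [← h.bwt_eq_of_pos hBWT (by omega) hq, ← hb, h.bwt_eq_of_pos hBWT hr' (by omega), hsa,
    Nat.add_sub_cancel]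

end Bwt

end IsSuffixArray_s14

theorem add_sub_eq_of_isGreatest {f : ℕ → ℕ} {P : ℕ → Prop} {i p : ℕ}
    (hf : ∀ j < i, ¬ P (j + 1) → f (j + 1) + 1 = f j)
    (hp : IsGreatest {j | P j ∧ j ≤ i} p) : f i + (i - p) = f p := by
  obtain ⟨⟨-, hpi⟩, hmax⟩ := hp
  have hrun : ∀ d, p + d ≤ i → f (p + d) + d = f p := by
    intro d
    induction d with
    | zero => simp
    | succ d ih =>
      intro hd
      have hnot : ¬ P (p + d + 1) := fun hP => by
        have := hmax ⟨hP, hd⟩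
        omega
      have hstep := hf (p + d) (by omega) hnot
      have := ih (by omega)
      show f (p + d + 1) + (d + 1) = f p
      omega
  simpa [Nat.add_sub_cancel' hpi] using hrun (i - p) (by omega)

/-- recovering PLCP from its irreducible values: with
`I = {i ∈ [0,n) : PLCP[i] is irreducible}`, we have `0 ∈ I`, and for every
`i < n`, letting `p` be the greatest element of `I` with `p ≤ i`,
`PLCP[i] = PLCP[p] − (i − p)` (stated as `PLCP[i] + (i − p) = PLCP[p]`). -/
theorem plcp_from_irreducible
    {α : Type*} [LinearOrder α] (n : ℕ) (hn : 1 ≤ n) (T : ℕ → α)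
    (hsent : ∀ i, i < n - 1 → T (n - 1) < T i)
    (SA ISA : ℕ → ℕ)
    (hSA : ∀ i, i < n → SA i < n)
    (hmono : ∀ i j, i < j → j < n → sfx T n (SA i) < sfx T n (SA j))
    (hISA : ∀ i, i < n → ISA i < n ∧ ISA (SA i) = i ∧ SA (ISA i) = i)
    (BWT : ℕ → α)
    (hBWT : ∀ k, k < n → BWT k = T ((SA k + n - 1) % n))
    (PLCP : ℕ → ℕ)
    (hPLCP : ∀ i, i < n → PLCP i =
      if ISA i = 0 then 0
      else lcp (sfx T n (SA (ISA i - 1))) (sfx T n (SA (ISA i))))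
    (I : Finset ℕ)
    (hI : I = (Finset.range n).filter
      (fun i => ISA i = 0 ∨ BWT (ISA i) ≠ BWT (ISA i - 1))) :
    0 ∈ I ∧
    ∀ i, i < n → ∀ p, IsGreatest {j | j ∈ I ∧ j ≤ i} p →
      PLCP i + (i - p) = PLCP p := by
  have hsa : IsSuffixArray_s14 T n SA ISA :=
    ⟨hSA, hmono, fun i hi => (hISA i hi).1, fun k hk => (hISA k hk).2.1,
      fun i hi => (hISA i hi).2.2⟩
  have hPLCP' : ∀ i < n, PLCP i = plcp T n SA ISA i := fun i hi => by
    rw [hPLCP i hi, plcp, hsa.sa_isa i hi]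
  have mem_I : ∀ i, i ∈ I ↔ i < n ∧ (ISA i = 0 ∨ BWT (ISA i) ≠ BWT (ISA i - 1)) := by
    simp [hI]
  refine ⟨(mem_I 0).2 ⟨hn, hsa.isa_zero_irreducible hBWT hsent hn⟩, fun i hi p hp => ?_⟩
  refine add_sub_eq_of_isGreatest (fun j hj hred => ?_) hp
  have hj' : j + 1 < n := by omega
  obtain ⟨hr, hb⟩ : ISA (j + 1) ≠ 0 ∧ BWT (ISA (j + 1)) = BWT (ISA (j + 1) - 1) := by
    simpa [mem_I, hj'] using hred
  rw [hPLCP' _ hj', hPLCP' j (by omega)]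
  exact hsa.plcp_succ_add_one_eq_of_reducible hBWT hsent hj' hr hb
end
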